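/- arXiv:2012.05112 — 5 statements merged into one kernel-verified Lean document; each statement's English description precedes it below -/
import Mathlib

section
/- Let k, q ≥ 2 be integers and set f₁(k,q) = ((k−1)q+1)^{(k−1)q²+1}. Let T be a finite tree whose edges are labeled by elements of ℤ/qℤ, and let L be a set of leaves of T with |L| = f₁(k,q). Then there exist a subset L₀ ⊆ L with |L₀| = k and a residue a ∈ ℤ/qℤ such that for every three leaves x₁, x₂, x₃ ∈ L₀ there is a vertex v ∈ V(T) for which the three paths in T from v to x₁, x₂, x₃ are pairwise disjoint outside of v and each of these three paths has weight congruent to a modulo q. -/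
/-!
Root the tree at some `r ∈ L` and descend from `r`, keeping track of the elements of `L` below
the current vertex `v`. If they meet at least `M = (k-1)q+1` branches at `v`, one element per
branch gives paths from `v` that pairwise meet only at `v`, and pigeonholing their weights leaves
`k` of them with a common weight. Otherwise some branch keeps a `1/M` fraction of them; descend
into it, and whenever an element is left behind, record `v` as a hub with such an element as its
tip. As `|L| = M ^ N` with `N = (k-1)q²+1`, either such a star appears or we collect `N` hubs
`u₀, u₁, …` going down from `r`, with tips `xᵢ`. Pigeonholing the pairs
(weight of `r → uᵢ`, weight of `uᵢ → xᵢ`) leaves `k` indices with a common pair `(a₀, a)`. Then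
paths between these hubs weigh `0`, so for `i < j < l` the paths from `u_j` to `x_i`, `x_j`, `x_l`,
which leave `u_j` towards `r`, towards `x_j` and towards `u_l` respectively, all weigh `a`.
-/

open SimpleGraph

/-- The weight of a walk in a graph whose edges are weighted by `w` (given as a
symmetric function on ordered pairs of vertices): the sum of the weights of the
traversed edges. -/
def walkWeight {V : Type*} {G : SimpleGraph V} {q : ℕ} (w : V → V → ZMod q)
    {u v : V} (p : G.Walk u v) : ZMod q :=
  (p.darts.map fun d => w d.toProd.1 d.toProd.2).sum

open Finset

theorem forall_distinct_of_forall_lt {α : Type*} [LinearOrder α] {P : α → α → α → Prop}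
    (swap₁₂ : ∀ {a b c}, P a b c → P b a c) (swap₂₃ : ∀ {a b c}, P a b c → P a c b)
    (h : ∀ {a b c}, a < b → b < c → P a b c) {a b c : α}
    (hab : a ≠ b) (hac : a ≠ c) (hbc : b ≠ c) : P a b c := by
  rcases hab.lt_or_gt with hab | hab <;> rcases hbc.lt_or_gt with hbc | hbc
  · exact h hab hbc
  · rcases hac.lt_or_gt with hac | hac
    · exact swap₂₃ (h hac hbc)
    · exact swap₂₃ (swap₁₂ (h hac hab))
  · rcases hac.lt_or_gt with hac | hac
    · exact swap₁₂ (h hab hac)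
    · exact swap₁₂ (swap₂₃ (h hbc hac))
  · exact swap₁₂ (swap₂₃ (swap₁₂ (h hbc hab)))

theorem Finset.exists_subset_card_eq_forall_eq {α β : Type*} [Fintype β] (f : α → β)
    {s : Finset α} {n : ℕ} (h : Fintype.card β * n < #s) :
    ∃ t ⊆ s, #t = n + 1 ∧ ∃ b, ∀ x ∈ t, f x = b := by
  classical
  obtain ⟨b, -, hb⟩ :=
    exists_lt_card_fiber_of_mul_lt_card_of_maps_to (fun x _ => mem_univ (f x)) h
  obtain ⟨t, hts, ht⟩ := exists_subset_card_eq hb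
  exact ⟨t, hts.trans (filter_subset _ _), ht, b, fun x hx => (mem_filter.1 (hts hx)).2⟩

section WalkWeight

variable {V : Type*} {G : SimpleGraph V} {q : ℕ} (w : V → V → ZMod q)

theorem walkWeight_append {u v x : V} (p : G.Walk u v) (p' : G.Walk v x) :
    walkWeight w (p.append p') = walkWeight w p + walkWeight w p' := by
  simp only [walkWeight, Walk.darts_append, List.map_append, List.sum_append]

theorem walkWeight_reverse (hw : ∀ u v, w u v = w v u) {u v : V} (p : G.Walk u v) :
    walkWeight w p.reverse = walkWeight w p := by
  simp only [walkWeight, Walk.darts_reverse, List.map_reverse, List.sum_reverse, List.map_map]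
  exact congrArg List.sum (List.map_congr_left fun d _ => (hw _ _).symm)

end WalkWeight

namespace SimpleGraph.IsTree

variable {V : Type*} {T : SimpleGraph V} (hT : T.IsTree)

noncomputable def path (u v : V) : T.Walk u v :=
  (hT.existsUnique_path u v).exists.choose

theorem path_isPath (u v : V) : (hT.path u v).IsPath :=
  (hT.existsUnique_path u v).exists.choose_spec

theorem eq_path {u v : V} {p : T.Walk u v} (hp : p.IsPath) : p = hT.path u v :=
  (hT.existsUnique_path u v).unique hp (hT.path_isPath u v)

theorem path_self (v : V) : hT.path v v = .nil :=
  (hT.eq_path .nil).symm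

theorem path_of_adj {u v : V} (h : T.Adj u v) : hT.path u v = .cons h .nil :=
  (hT.eq_path (by simp [h.ne])).symm

theorem reverse_path (u v : V) : (hT.path u v).reverse = hT.path v u :=
  hT.eq_path (hT.path_isPath u v).reverse

theorem mem_support_path_comm {u v z : V} :
    z ∈ (hT.path u v).support ↔ z ∈ (hT.path v u).support := by
  rw [← hT.reverse_path v u, Walk.support_reverse, List.mem_reverse]

theorem path_eq_append {u v m : V} (hm : m ∈ (hT.path u v).support) :
    hT.path u v = (hT.path u m).append (hT.path m v) := by
  classical
  rw [← hT.eq_path ((hT.path_isPath u v).takeUntil hm),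
    ← hT.eq_path ((hT.path_isPath u v).dropUntil hm), Walk.take_spec]

theorem support_path_subset_left {u v m : V} (hm : m ∈ (hT.path u v).support) :
    (hT.path u m).support ⊆ (hT.path u v).support := fun _ hz => by
  rw [hT.path_eq_append hm, Walk.mem_support_append_iff]
  exact .inl hz

theorem walkWeight_path_eq_add {q : ℕ} (w : V → V → ZMod q) {u v m : V}
    (hm : m ∈ (hT.path u v).support) :
    walkWeight w (hT.path u v) = walkWeight w (hT.path u m) + walkWeight w (hT.path m v) := by
  rw [hT.path_eq_append hm, walkWeight_append]

theorem walkWeight_path_comm {q : ℕ} (w : V → V → ZMod q) (hw : ∀ u v, w u v = w v u)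
    (u v : V) : walkWeight w (hT.path u v) = walkWeight w (hT.path v u) := by
  rw [← hT.reverse_path v u, walkWeight_reverse w hw]

def IsAncestor (r a b : V) : Prop :=
  a ∈ (hT.path r b).support

theorem isAncestor_root (r a : V) : hT.IsAncestor r r a :=
  Walk.start_mem_support _

theorem isAncestor_refl (r a : V) : hT.IsAncestor r a a :=
  Walk.end_mem_support _

variable {hT} {r a b c : V}

theorem IsAncestor.trans (hab : hT.IsAncestor r a b) (hbc : hT.IsAncestor r b c) :
    hT.IsAncestor r a c :=
  hT.support_path_subset_left hbc hab

theorem IsAncestor.antisymm (hab : hT.IsAncestor r a b) (hba : hT.IsAncestor r b a) : a = b := by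
  have h₁ := congrArg Walk.length (hT.path_eq_append hab)
  have h₂ := congrArg Walk.length (hT.path_eq_append hba)
  simp only [Walk.length_append] at h₁ h₂
  exact Walk.eq_of_length_eq_zero (p := hT.path a b) (by omega)

theorem IsAncestor.mem_path (hab : hT.IsAncestor r a b) (hbc : hT.IsAncestor r b c) :
    b ∈ (hT.path a c).support := by
  have hp := hT.path_isPath r c
  rw [hT.path_eq_append hbc, hT.path_eq_append hab, ← Walk.append_assoc] at hp
  rw [← hT.eq_path hp.of_append_right, Walk.mem_support_append_iff]
  exact .inl (Walk.end_mem_support _)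

theorem IsAncestor.of_mem_path_left (hac : hT.IsAncestor r a c)
    (hb : b ∈ (hT.path a c).support) : hT.IsAncestor r a b := by
  have hp := hT.path_isPath r c
  rw [hT.path_eq_append hac, hT.path_eq_append hb, Walk.append_assoc] at hp
  rw [IsAncestor, ← hT.eq_path hp.of_append_left, Walk.mem_support_append_iff]
  exact .inl (Walk.end_mem_support _)

theorem IsAncestor.of_mem_path_right (hac : hT.IsAncestor r a c)
    (hb : b ∈ (hT.path a c).support) : hT.IsAncestor r b c := by
  rw [IsAncestor, hT.path_eq_append hac, Walk.mem_support_append_iff]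
  exact .inr hb

theorem IsAncestor.walkWeight_path_eq_zero {q : ℕ} {w : V → V → ZMod q}
    (hab : hT.IsAncestor r a b) (heq : walkWeight w (hT.path r a) = walkWeight w (hT.path r b)) :
    walkWeight w (hT.path a b) = 0 := by
  have h := hT.walkWeight_path_eq_add w hab
  rwa [← heq, left_eq_add] at h

variable (hT)

noncomputable def stepToward (v x : V) : V :=
  (hT.path v x).snd

theorem stepToward_self (v : V) : hT.stepToward v v = v := by
  simp [stepToward, hT.path_self]

theorem adj_stepToward {v x : V} (h : v ≠ x) : T.Adj v (hT.stepToward v x) :=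
  Walk.adj_snd (Walk.not_nil_of_ne h)

theorem stepToward_ne {v x : V} (h : x ≠ v) : hT.stepToward v x ≠ v :=
  (hT.adj_stepToward h.symm).ne'

theorem stepToward_eq_self_iff {v x : V} : hT.stepToward v x = v ↔ x = v :=
  ⟨not_imp_not.1 hT.stepToward_ne, fun h => h ▸ hT.stepToward_self v⟩

theorem stepToward_mem_support (v x : V) : hT.stepToward v x ∈ (hT.path v x).support :=
  Walk.getVert_mem_support _ _

theorem stepToward_of_adj {v b : V} (h : T.Adj v b) : hT.stepToward v b = b := by
  simp [stepToward, hT.path_of_adj h]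

theorem stepToward_eq_of_mem {v x m : V} (hm : m ∈ (hT.path v x).support) (hmv : m ≠ v) :
    hT.stepToward v x = hT.stepToward v m := by
  classical
  rw [stepToward, stepToward, ← Walk.snd_takeUntil hmv _ hm,
    hT.eq_path ((hT.path_isPath v x).takeUntil hm)]

def Separated (v a b : V) : Prop :=
  ∀ z ∈ (hT.path v a).support, z ∈ (hT.path v b).support → z = v

variable {hT} {v x : V}

theorem Separated.symm (h : hT.Separated v a b) : hT.Separated v b a :=
  fun z hb ha => h z ha hb

theorem separated_of_stepToward_ne (h : hT.stepToward v a ≠ hT.stepToward v b) :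
    hT.Separated v a b := by
  intro z ha hb
  by_contra hzv
  exact h ((hT.stepToward_eq_of_mem ha hzv).trans (hT.stepToward_eq_of_mem hb hzv).symm)

theorem Separated.of_stepToward_eq {a' : V} (h : hT.Separated v a b)
    (heq : hT.stepToward v a' = hT.stepToward v a) : hT.Separated v a' b := by
  intro z ha' hb
  by_contra hzv
  have hz : hT.stepToward v z = hT.stepToward v a :=
    (hT.stepToward_eq_of_mem ha' hzv).symm.trans heq
  refine hT.stepToward_ne hzv (h _ ?_ ?_)
  · exact hz ▸ hT.stepToward_mem_support v a
  · exact hT.support_path_subset_left hb (hT.stepToward_mem_support v z)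

theorem separated_of_mem_path (h : v ∈ (hT.path a b).support) : hT.Separated v a b := by
  intro z ha hb
  have hnd := (hT.path_isPath a b).support_nodup
  rw [hT.path_eq_append h, Walk.support_append] at hnd
  rw [← Walk.cons_tail_support] at hb
  by_contra hzv
  exact List.disjoint_of_nodup_append hnd (hT.mem_support_path_comm.1 ha)
    ((List.mem_cons.1 hb).resolve_left hzv)

theorem Separated.mem_path (h : hT.Separated v a b) : v ∈ (hT.path a b).support := by
  have hpath : ((hT.path v a).reverse.append (hT.path v b)).IsPath := by
    have hb := (hT.path_isPath v b).support_nodup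
    rw [← Walk.cons_tail_support] at hb
    rw [Walk.isPath_def, Walk.support_append, Walk.support_reverse, List.nodup_append]
    refine ⟨List.nodup_reverse.2 (hT.path_isPath v a).support_nodup, hb.of_cons, ?_⟩
    rintro z hza _ hzb rfl
    have hzv := h z (List.mem_reverse.1 hza)
      (Walk.cons_tail_support _ ▸ List.mem_cons_of_mem _ hzb)
    exact (List.nodup_cons.1 hb).1 (hzv ▸ hzb)
  rw [← hT.eq_path hpath, Walk.mem_support_append_iff]
  exact .inr (Walk.start_mem_support _)

variable (hT) {q : ℕ} (w : V → V → ZMod q)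

def IsBalancedCenter (a : ZMod q) (v x₁ x₂ x₃ : V) : Prop :=
  walkWeight w (hT.path v x₁) = a ∧ walkWeight w (hT.path v x₂) = a ∧
    walkWeight w (hT.path v x₃) = a ∧
    hT.Separated v x₁ x₂ ∧ hT.Separated v x₁ x₃ ∧ hT.Separated v x₂ x₃

def HasBalancedTripods (k : ℕ) (L : Finset V) : Prop :=
  ∃ L₀ ⊆ L, #L₀ = k ∧ ∃ a : ZMod q, ∀ x₁ ∈ L₀, ∀ x₂ ∈ L₀, ∀ x₃ ∈ L₀,
    x₁ ≠ x₂ → x₁ ≠ x₃ → x₂ ≠ x₃ → ∃ v, hT.IsBalancedCenter w a v x₁ x₂ x₃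

variable {hT w} {a : ZMod q} {x₁ x₂ x₃ : V} {k : ℕ} {L : Finset V}

theorem IsBalancedCenter.swap₁₂ (h : hT.IsBalancedCenter w a v x₁ x₂ x₃) :
    hT.IsBalancedCenter w a v x₂ x₁ x₃ :=
  let ⟨h₁, h₂, h₃, h₁₂, h₁₃, h₂₃⟩ := h
  ⟨h₂, h₁, h₃, h₁₂.symm, h₂₃, h₁₃⟩

theorem IsBalancedCenter.swap₂₃ (h : hT.IsBalancedCenter w a v x₁ x₂ x₃) :
    hT.IsBalancedCenter w a v x₁ x₃ x₂ :=
  let ⟨h₁, h₂, h₃, h₁₂, h₁₃, h₂₃⟩ := h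
  ⟨h₁, h₃, h₂, h₁₃, h₁₂, h₂₃.symm⟩

theorem HasBalancedTripods.mono {L' : Finset V} (h : hT.HasBalancedTripods w k L')
    (hL : L' ⊆ L) : hT.HasBalancedTripods w k L :=
  let ⟨L₀, hL₀, h⟩ := h
  ⟨L₀, hL₀.trans hL, h⟩

theorem HasBalancedTripods.exists_walks (h : hT.HasBalancedTripods w k L) :
    ∃ L₀ : Finset V, L₀ ⊆ L ∧ L₀.card = k ∧ ∃ a : ZMod q,
      ∀ x₁ ∈ L₀, ∀ x₂ ∈ L₀, ∀ x₃ ∈ L₀, x₁ ≠ x₂ → x₁ ≠ x₃ → x₂ ≠ x₃ →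
        ∃ (v : V) (p₁ : T.Walk v x₁) (p₂ : T.Walk v x₂) (p₃ : T.Walk v x₃),
          p₁.IsPath ∧ p₂.IsPath ∧ p₃.IsPath ∧
          walkWeight w p₁ = a ∧ walkWeight w p₂ = a ∧ walkWeight w p₃ = a ∧
          (∀ x, x ∈ p₁.support → x ∈ p₂.support → x = v) ∧
          (∀ x, x ∈ p₁.support → x ∈ p₃.support → x = v) ∧
          (∀ x, x ∈ p₂.support → x ∈ p₃.support → x = v) := by
  obtain ⟨L₀, hL₀, hk, a, h⟩ := h
  refine ⟨L₀, hL₀, hk, a, fun x₁ h₁ x₂ h₂ x₃ h₃ h₁₂ h₁₃ h₂₃ => ?_⟩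
  obtain ⟨v, hv⟩ := h x₁ h₁ x₂ h₂ x₃ h₃ h₁₂ h₁₃ h₂₃
  exact ⟨v, _, _, _, hT.path_isPath _ _, hT.path_isPath _ _, hT.path_isPath _ _, hv⟩

theorem hasBalancedTripods_of_injOn_stepToward [NeZero q] {C : Finset V}
    (hC : Set.InjOn (hT.stepToward v) C) (hk : 1 ≤ k) (hcard : (k - 1) * q + 1 ≤ #C) :
    hT.HasBalancedTripods w k C := by
  obtain ⟨J, hJC, hJk, a, hJa⟩ := exists_subset_card_eq_forall_eq
    (fun x => walkWeight w (hT.path v x)) (s := C) (n := k - 1)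
    (by rw [ZMod.card, mul_comm]; omega)
  have hsep {x y : V} (hx : x ∈ J) (hy : y ∈ J) (hxy : x ≠ y) : hT.Separated v x y :=
    separated_of_stepToward_ne fun h => hxy (hC (hJC hx) (hJC hy) h)
  refine ⟨J, hJC, by omega, a, fun x₁ h₁ x₂ h₂ x₃ h₃ h₁₂ h₁₃ h₂₃ => ⟨v, ?_⟩⟩
  exact ⟨hJa x₁ h₁, hJa x₂ h₂, hJa x₃ h₃, hsep h₁ h₂ h₁₂, hsep h₁ h₃ h₁₃, hsep h₂ h₃ h₂₃⟩

structure IsBranchChain (r v : V) (S : Finset V) (n : ℕ) (hub tip : ℕ → V) : Prop where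
  tip_mem : ∀ i < n, tip i ∈ S
  isAncestor_hub : ∀ i < n, hT.IsAncestor r v (hub i)
  hub_isAncestor_tip : ∀ i < n, hT.IsAncestor r (hub i) (tip i)
  hub_isAncestor_hub : ∀ i j, i < j → j < n → hT.IsAncestor r (hub i) (hub j)
  hub_ne_hub : ∀ i j, i < j → j < n → hub i ≠ hub j
  stepToward_tip_ne : ∀ i j, i < j → j < n →
    hT.stepToward (hub i) (tip i) ≠ hT.stepToward (hub i) (hub j)

variable {S S' : Finset V} {n : ℕ} {hub tip : ℕ → V}

namespace IsBranchChain

variable {i j l : ℕ}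

theorem zero : hT.IsBranchChain r v S 0 hub tip :=
  ⟨by simp, by simp, by simp, by simp, by simp, by simp⟩

theorem one (hx : x ∈ S) (hvx : hT.IsAncestor r v x) :
    hT.IsBranchChain r v S 1 (fun _ => v) (fun _ => x) :=
  ⟨fun _ _ => hx, fun _ _ => hT.isAncestor_refl r v, fun _ _ => hvx,
    by omega, by omega, by omega⟩

theorem of_isAncestor (hch : hT.IsBranchChain r b S n hub tip) (hvb : hT.IsAncestor r v b) :
    hT.IsBranchChain r v S n hub tip :=
  { hch with isAncestor_hub := fun i hi => hvb.trans (hch.isAncestor_hub i hi) }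

theorem cons (hch : hT.IsBranchChain r b S' n hub tip) (hS' : S' ⊆ S) (hadj : T.Adj v b)
    (hvb : hT.IsAncestor r v b) (hx : x ∈ S) (hvx : hT.IsAncestor r v x)
    (hxb : hT.stepToward v x ≠ b) :
    hT.IsBranchChain r v S (n + 1) (fun | 0 => v | i + 1 => hub i)
      (fun | 0 => x | i + 1 => tip i) := by
  have hstep (j : ℕ) (hj : j < n) : hT.stepToward v (hub j) = b := by
    rw [hT.stepToward_eq_of_mem (hvb.mem_path (hch.isAncestor_hub j hj)) hadj.ne',
      hT.stepToward_of_adj hadj]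
  refine ⟨?_, ?_, ?_, ?_, ?_, ?_⟩
  · rintro (_ | i) hi
    exacts [hx, hS' (hch.tip_mem i (by omega))]
  · rintro (_ | i) hi
    exacts [hT.isAncestor_refl r v, hvb.trans (hch.isAncestor_hub i (by omega))]
  · rintro (_ | i) hi
    exacts [hvx, hch.hub_isAncestor_tip i (by omega)]
  · rintro (_ | i) (_ | j) hij hj
    exacts [absurd hij (by omega), hvb.trans (hch.isAncestor_hub j (by omega)),
      absurd hij (by omega), hch.hub_isAncestor_hub i j (by omega) (by omega)]
  · rintro (_ | i) (_ | j) hij hj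
    exacts [absurd hij (by omega), fun (h : v = hub j) =>
        hadj.ne (hvb.antisymm (h ▸ hch.isAncestor_hub j (by omega))),
      absurd hij (by omega), hch.hub_ne_hub i j (by omega) (by omega)]
  · rintro (_ | i) (_ | j) hij hj
    exacts [absurd hij (by omega), (hstep j (by omega)).symm ▸ hxb,
      absurd hij (by omega), hch.stepToward_tip_ne i j (by omega) (by omega)]

variable (hch : hT.IsBranchChain r v S n hub tip)
include hch

theorem stepToward_hub_tip_of_lt (hjl : j < l) (hln : l < n) :
    hT.stepToward (hub j) (tip l) = hT.stepToward (hub j) (hub l) :=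
  hT.stepToward_eq_of_mem
    ((hch.hub_isAncestor_hub j l hjl hln).mem_path (hch.hub_isAncestor_tip l hln))
    (hch.hub_ne_hub j l hjl hln).symm

theorem tip_ne_tip (hij : i < j) (hjn : j < n) : tip i ≠ tip j := fun h =>
  hch.stepToward_tip_ne i j hij hjn (h ▸ hch.stepToward_hub_tip_of_lt hij hjn)

theorem hub_mem_path_tip (hij : i < j) (hjn : j < n) :
    hub i ∈ (hT.path (hub j) (tip i)).support :=
  (separated_of_stepToward_ne (hch.stepToward_tip_ne i j hij hjn)).symm.mem_path

theorem stepToward_hub_tip_of_gt (hij : i < j) (hjn : j < n) :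
    hT.stepToward (hub j) (tip i) = hT.stepToward (hub j) r := by
  have hne := hch.hub_ne_hub i j hij hjn
  have hi : hub i ∈ (hT.path (hub j) r).support :=
    hT.mem_support_path_comm.1 (hch.hub_isAncestor_hub i j hij hjn)
  rw [hT.stepToward_eq_of_mem (hch.hub_mem_path_tip hij hjn) hne,
    hT.stepToward_eq_of_mem hi hne]

theorem isBalancedCenter (hw : ∀ u v, w u v = w v u) {J : Finset ℕ} {a₀ a : ZMod q}
    (hroot : ∀ m ∈ J, walkWeight w (hT.path r (hub m)) = a₀)
    (htip : ∀ m ∈ J, walkWeight w (hT.path (hub m) (tip m)) = a)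
    (hi : i ∈ J) (hj : j ∈ J) (hl : l ∈ J) (hij : i < j) (hjl : j < l) (hln : l < n) :
    hT.IsBalancedCenter w a (hub j) (tip i) (tip j) (tip l) := by
  have hjn : j < n := hjl.trans hln
  have hjl' := hch.hub_isAncestor_hub j l hjl hln
  refine ⟨?_, htip j hj, ?_, ?_, ?_, ?_⟩
  · rw [hT.walkWeight_path_eq_add w (hch.hub_mem_path_tip hij hjn),
      hT.walkWeight_path_comm w hw (hub j),
      (hch.hub_isAncestor_hub i j hij hjn).walkWeight_path_eq_zero
        ((hroot i hi).trans (hroot j hj).symm), zero_add, htip i hi]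
  · rw [hT.walkWeight_path_eq_add w (hjl'.mem_path (hch.hub_isAncestor_tip l hln)),
      hjl'.walkWeight_path_eq_zero ((hroot j hj).trans (hroot l hl).symm), zero_add, htip l hl]
  · exact (separated_of_mem_path (hch.hub_isAncestor_tip j hjn)).of_stepToward_eq
      (hch.stepToward_hub_tip_of_gt hij hjn)
  · exact (separated_of_mem_path (hjl'.trans (hch.hub_isAncestor_tip l hln))).of_stepToward_eq
      (hch.stepToward_hub_tip_of_gt hij hjn)
  · exact separated_of_stepToward_ne
      ((hch.stepToward_hub_tip_of_lt hjl hln).symm ▸ hch.stepToward_tip_ne j l hjl hln)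

end IsBranchChain

theorem IsBranchChain.hasBalancedTripods [NeZero q] (hw : ∀ u v, w u v = w v u) (hk : 1 ≤ k)
    (hch : hT.IsBranchChain r v S ((k - 1) * q ^ 2 + 1) hub tip) :
    hT.HasBalancedTripods w k S := by
  classical
  obtain ⟨J, hJ, hJk, ⟨a₀, a⟩, hJa⟩ := exists_subset_card_eq_forall_eq
    (fun m => (walkWeight w (hT.path r (hub m)), walkWeight w (hT.path (hub m) (tip m))))
    (s := range ((k - 1) * q ^ 2 + 1)) (n := k - 1)
    (by rw [Fintype.card_prod, ZMod.card, card_range]; nlinarith)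
  have hJn {m : ℕ} (hm : m ∈ J) : m < (k - 1) * q ^ 2 + 1 := mem_range.1 (hJ hm)
  have hinj : Set.InjOn tip J := by
    intro i hi j hj h
    by_contra hne
    rcases Nat.lt_or_gt_of_ne hne with hlt | hlt
    exacts [hch.tip_ne_tip hlt (hJn hj) h, hch.tip_ne_tip hlt (hJn hi) h.symm]
  refine ⟨J.image tip, image_subset_iff.2 fun i hi => hch.tip_mem i (hJn hi),
    by rw [card_image_of_injOn hinj]; omega, a, ?_⟩
  simp only [forall_mem_image]
  intro i hi j hj l hl hij hil hjl
  refine forall_distinct_of_forall_lt (P := fun i j l => i ∈ J → j ∈ J → l ∈ J →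
      ∃ c, hT.IsBalancedCenter w a c (tip i) (tip j) (tip l))
    (fun h hi hj hl => (h hj hi hl).imp fun _ => IsBalancedCenter.swap₁₂)
    (fun h hi hj hl => (h hi hl hj).imp fun _ => IsBalancedCenter.swap₂₃)
    (fun hij hjl hi hj hl => ⟨_, hch.isBalancedCenter hw
      (fun m hm => congrArg Prod.fst (hJa m hm)) (fun m hm => congrArg Prod.snd (hJa m hm))
      hi hj hl hij hjl (hJn hl)⟩)
    (ne_of_apply_ne tip hij) (ne_of_apply_ne tip hil) (ne_of_apply_ne tip hjl) hi hj hl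

theorem exists_adj_pow_le_card_filter_stepToward [DecidableEq V] {M : ℕ}
    (hM : 2 ≤ M) (hB : #(S.image (hT.stepToward v)) < M) (hS : M ^ (n + 2) ≤ #S) :
    ∃ b, T.Adj v b ∧ M ^ (n + 1) ≤ #{x ∈ S | hT.stepToward v x = b} := by
  have hSne : S.Nonempty := card_pos.1 ((pow_pos (by omega) _).trans_le hS)
  have hmul : #(S.image (hT.stepToward v)) * M ^ (n + 1) ≤ #S :=
    calc #(S.image (hT.stepToward v)) * M ^ (n + 1) ≤ M * M ^ (n + 1) := by gcongr
      _ = M ^ (n + 2) := by ring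
      _ ≤ #S := hS
  obtain ⟨b, hbB, hb⟩ := exists_le_card_fiber_of_mul_le_card_of_maps_to
    (fun x hx => mem_image_of_mem (hT.stepToward v) hx) (hSne.image _) hmul
  obtain ⟨x, -, rfl⟩ := mem_image.1 hbB
  refine ⟨_, hT.adj_stepToward fun hvx => ?_, hb⟩
  subst hvx
  have hfiber : #{y ∈ S | hT.stepToward v y = hT.stepToward v v} ≤ 1 := by
    refine card_le_one.2 fun y hy z hz => ?_
    simp only [mem_filter, hT.stepToward_self, hT.stepToward_eq_self_iff] at hy hz
    exact hy.2.trans hz.2.symm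
  have := Nat.le_self_pow (n := n + 1) (by omega) M
  omega

theorem sum_length_path_lt (hS' : S' ⊆ S) (hne : S'.Nonempty)
    (hadj : T.Adj v b) (hb : ∀ x ∈ S', b ∈ (hT.path v x).support) :
    ∑ x ∈ S', (hT.path b x).length < ∑ x ∈ S, (hT.path v x).length :=
  calc ∑ x ∈ S', (hT.path b x).length < ∑ x ∈ S', (hT.path v x).length :=
        sum_lt_sum_of_nonempty hne fun x hx => by
          rw [hT.path_eq_append (hb x hx), Walk.length_append, hT.path_of_adj hadj]
          simp
    _ ≤ ∑ x ∈ S, (hT.path v x).length := sum_le_sum_of_subset hS'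

theorem exists_injOn_stepToward_or_isBranchChain (r : V) {M : ℕ} (hM : 2 ≤ M) (n : ℕ)
    (hS : ∀ x ∈ S, hT.IsAncestor r v x) (hcard : M ^ n ≤ #S) :
    (∃ c, ∃ C ⊆ S, Set.InjOn (hT.stepToward c) C ∧ M ≤ #C) ∨
      ∃ hub tip : ℕ → V, hT.IsBranchChain r v S n hub tip := by
  classical
  induction hm : ∑ x ∈ S, (hT.path v x).length using Nat.strong_induction_on
    generalizing n v S with
  | _ m ih =>
  obtain _ | _ | n := n
  · exact .inr ⟨fun _ => v, fun _ => v, .zero⟩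
  · obtain ⟨x, hx⟩ : S.Nonempty := card_pos.1 (by rw [pow_one] at hcard; omega)
    exact .inr ⟨_, _, .one hx (hS x hx)⟩
  by_cases hstar : M ≤ #(S.image (hT.stepToward v))
  · obtain ⟨C, hCS, hinj, hC⟩ := exists_subset_injOn_image_eq_of_surjOn (↑S)
      (S.image (hT.stepToward v)) (by rw [coe_image]; exact Set.surjOn_image _ _)
    exact .inl ⟨v, C, coe_subset.1 hCS, hinj, by rwa [← card_image_of_injOn hinj, hC]⟩
  obtain ⟨b, hadj, hbig⟩ :=
    hT.exists_adj_pow_le_card_filter_stepToward hM (not_le.1 hstar) hcard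
  set S' := {x ∈ S | hT.stepToward v x = b}
  have hS'S : S' ⊆ S := filter_subset _ _
  have hbx : ∀ x ∈ S', b ∈ (hT.path v x).support := fun x hx =>
    (mem_filter.1 hx).2 ▸ hT.stepToward_mem_support v x
  have hS' : ∀ x ∈ S', hT.IsAncestor r b x := fun x hx =>
    (hS x (hS'S hx)).of_mem_path_right (hbx x hx)
  have hne : S'.Nonempty := card_pos.1 ((pow_pos (by omega) _).trans_le hbig)
  have hvb : hT.IsAncestor r v b :=
    (hS _ (hS'S hne.choose_spec)).of_mem_path_left (hbx _ hne.choose_spec)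
  have hlt := hm ▸ hT.sum_length_path_lt hS'S hne hadj hbx
  by_cases hside : ∃ x ∈ S, hT.stepToward v x ≠ b
  · obtain ⟨x, hx, hxb⟩ := hside
    obtain ⟨c, C, hC, h⟩ | ⟨hub, tip, hch⟩ := ih _ hlt (n + 1) hS' hbig rfl
    · exact .inl ⟨c, C, hC.trans hS'S, h⟩
    · exact .inr ⟨_, _, hch.cons hS'S hadj hvb hx (hS x hx) hxb⟩
  · have hSS' : S' = S :=
      filter_true_of_mem fun x hx => not_not.1 fun h => hside ⟨x, hx, h⟩
    rw [hSS'] at hS' hlt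
    obtain h | ⟨hub, tip, hch⟩ := ih _ hlt (n + 2) hS' hcard rfl
    · exact .inl h
    · exact .inr ⟨hub, tip, hch.of_isAncestor hvb⟩

end SimpleGraph.IsTree

theorem tree_leaves_common_branch_vertex_general
    (k q : ℕ) (hk : 2 ≤ k) (hq : 2 ≤ q)
    (V : Type) (T : SimpleGraph V)
    (hT : T.IsTree)
    (w : V → V → ZMod q) (hw : ∀ u v : V, w u v = w v u)
    (L : Finset V)
    (hcard : L.card = ((k - 1) * q + 1) ^ ((k - 1) * q ^ 2 + 1)) :
    ∃ L₀ : Finset V, L₀ ⊆ L ∧ L₀.card = k ∧ ∃ a : ZMod q,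
      ∀ x₁ ∈ L₀, ∀ x₂ ∈ L₀, ∀ x₃ ∈ L₀, x₁ ≠ x₂ → x₁ ≠ x₃ → x₂ ≠ x₃ →
        ∃ (v : V) (p₁ : T.Walk v x₁) (p₂ : T.Walk v x₂) (p₃ : T.Walk v x₃),
          p₁.IsPath ∧ p₂.IsPath ∧ p₃.IsPath ∧
          walkWeight w p₁ = a ∧ walkWeight w p₂ = a ∧ walkWeight w p₃ = a ∧
          (∀ x, x ∈ p₁.support → x ∈ p₂.support → x = v) ∧
          (∀ x, x ∈ p₁.support → x ∈ p₃.support → x = v) ∧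
          (∀ x, x ∈ p₂.support → x ∈ p₃.support → x = v) := by
  have : NeZero q := ⟨by omega⟩
  have hM : 2 ≤ (k - 1) * q + 1 := by
    have := Nat.mul_le_mul (show 1 ≤ k - 1 by omega) (show 1 ≤ q by omega)
    omega
  obtain ⟨r, -⟩ : L.Nonempty := card_pos.1 (hcard ▸ pow_pos (by omega) _)
  apply IsTree.HasBalancedTripods.exists_walks
  obtain ⟨c, C, hCL, hC, hCcard⟩ | ⟨hub, tip, hch⟩ :=
    hT.exists_injOn_stepToward_or_isBranchChain r hM _ (fun x _ => hT.isAncestor_root r x)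
      hcard.ge
  · exact (IsTree.hasBalancedTripods_of_injOn_stepToward hC (by omega) hCcard).mono hCL
  · exact hch.hasBalancedTripods hw (by omega)

/-- Key lemma:  with `f₁(k,q) = ((k-1)q+1)^((k-1)q²+1)`, for every tree `T` with edges
labeled by elements of `ℤ/q` and every set `L` of `f₁(k,q)` leaves of `T`, there are a
subset `L₀ ⊆ L` of `k` leaves and a residue `a ∈ ℤ/q` such that every three distinct
leaves of `L₀` are joined to a common vertex `v` by three paths that are pairwise
disjoint outside of `v` and all have weight `a` modulo `q`. -/
theorem tree_leaves_common_branch_vertex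
    (k q : ℕ) (hk : 2 ≤ k) (hq : 2 ≤ q)
    (V : Type) [Fintype V] (T : SimpleGraph V) [DecidableRel T.Adj]
    (hT : T.IsTree)
    (w : V → V → ZMod q) (hw : ∀ u v : V, w u v = w v u)
    (L : Finset V) (hleaf : ∀ x ∈ L, T.degree x = 1)
    (hcard : L.card = ((k - 1) * q + 1) ^ ((k - 1) * q ^ 2 + 1)) :
    ∃ L₀ : Finset V, L₀ ⊆ L ∧ L₀.card = k ∧ ∃ a : ZMod q,
      ∀ x₁ ∈ L₀, ∀ x₂ ∈ L₀, ∀ x₃ ∈ L₀, x₁ ≠ x₂ → x₁ ≠ x₃ → x₂ ≠ x₃ →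
        ∃ (v : V) (p₁ : T.Walk v x₁) (p₂ : T.Walk v x₂) (p₃ : T.Walk v x₃),
          p₁.IsPath ∧ p₂.IsPath ∧ p₃.IsPath ∧
          walkWeight w p₁ = a ∧ walkWeight w p₂ = a ∧ walkWeight w p₃ = a ∧
          (∀ x, x ∈ p₁.support → x ∈ p₂.support → x = v) ∧
          (∀ x, x ∈ p₁.support → x ∈ p₃.support → x = v) ∧
          (∀ x, x ∈ p₂.support → x ∈ p₃.support → x = v) :=
  tree_leaves_common_branch_vertex_general k q hk hq V T hT w hw L hcard
end

section
/- Let q ≥ 2 be an integer, and let Γ = (V,E) be a complete digraph on ⌈2q·ln q⌉ vertices whose edges carry weights w(e) ∈ ℤ/qℤ. Then Γ contains a directed cycle C whose total weight (the sum of the weights of its edges) is divisible by q. -/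
/-!
Suppose there is no zero cycle. Grow a family of simple paths from a fixed vertex `u` to a common
end `v` inside a vertex set `S`, whose set `A` of weights gains an element at each step while `S`
gains at most two vertices; `A` never contains `-w v u`, so it never fills the group.
For fresh vertices `z ≠ z'` the paths continued by `v → z'` or by `v → z → z'` have weights
`(A + w v z') ∪ (A + w v z + w z z')`, which is larger than `A` unless
`w v z + w z z' - w v z'` lies in the stabiliser `H` of `A`, a proper subgroup.
If that happens for all fresh pairs, these differences form an `H`-valued weighting of the fresh
vertices with the same cycle sums as `w`, and induction on the order of the group applies, with
`|H| ≤ |G| / 2`. Counting vertices gives the recursion `cycleBound q = 2q - 2 + cycleBound (q / 2)`,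
with `cycleBound 2 = 3` by a triangle argument, and `cycleBound q ≤ ⌈2 q log q⌉`.
-/

open Finset Pointwise

section Cycles

variable {V G : Type*} [AddCommGroup G]

def HasZeroCycle (w : V → V → G) : Prop :=
  ∃ (m : ℕ) (c : Fin (m + 2) → V), Function.Injective c ∧
    ∑ i : Fin (m + 2), w (c i) (c (i + 1)) = 0

def pathWeight (w : V → V → G) {t : ℕ} (p : Fin (t + 1) → V) : G :=
  ∑ i : Fin t, w (p i.castSucc) (p i.succ)

lemma sum_cycle_eq_pathWeight_add (w : V → V → G) {t : ℕ} (p : Fin (t + 2) → V) :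
    ∑ i : Fin (t + 2), w (p i) (p (i + 1)) = pathWeight w p + w (p (Fin.last _)) (p 0) := by
  rw [Fin.sum_univ_castSucc, Fin.last_add_one]
  simp only [Fin.coeSucc_eq_succ, pathWeight]

lemma pathWeight_snoc (w : V → V → G) {t : ℕ} (p : Fin (t + 1) → V) (z : V) :
    pathWeight w (Fin.snoc p z : Fin (t + 2) → V) = pathWeight w p + w (p (Fin.last t)) z := by
  simp only [pathWeight, Fin.sum_univ_castSucc, Fin.succ_castSucc, Fin.snoc_castSucc, Fin.succ_last,
    Fin.snoc_last]

def IsPathWeight (w : V → V → G) (S : Finset V) (u v : V) (a : G) : Prop :=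
  ∃ (t : ℕ) (p : Fin (t + 2) → V), Function.Injective p ∧ p 0 = u ∧ p (Fin.last _) = v ∧
    Set.range p ⊆ S ∧ pathWeight w p = a

variable {w : V → V → G} {S : Finset V} {u v z : V} {a : G}

lemma isPathWeight_pair [DecidableEq V] (huv : u ≠ v) : IsPathWeight w {u, v} u v (w u v) := by
  refine ⟨0, ![u, v], ?_, rfl, rfl, ?_, ?_⟩
  · intro i j
    fin_cases i <;> fin_cases j <;> simp [huv, huv.symm]
  · rw [Matrix.range_cons, Matrix.range_cons, Matrix.range_empty, Set.union_empty, coe_pair]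
    rfl
  · simp [pathWeight]

lemma IsPathWeight.mono {T : Finset V} (h : IsPathWeight w S u v a) (hST : S ⊆ T) :
    IsPathWeight w T u v a := by
  obtain ⟨t, p, hp, hu, hv, hS, ha⟩ := h
  exact ⟨t, p, hp, hu, hv, hS.trans (coe_subset.2 hST), ha⟩

lemma IsPathWeight.snoc [DecidableEq V] (h : IsPathWeight w S u v a) (hz : z ∉ S) :
    IsPathWeight w (insert z S) u z (a + w v z) := by
  obtain ⟨t, p, hp, rfl, rfl, hS, rfl⟩ := h
  refine ⟨t + 1, Fin.snoc p z, Fin.snoc_injective_of_injective hp fun hz' => hz (hS hz'),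
    ?_, ?_, ?_, pathWeight_snoc w p z⟩
  · simp
  · simp
  · rw [Fin.range_snoc, coe_insert]
    exact Set.insert_subset_insert hS

lemma IsPathWeight.hasZeroCycle (h : IsPathWeight w S u v a) (h0 : a + w v u = 0) :
    HasZeroCycle w := by
  obtain ⟨t, p, hp, rfl, rfl, -, rfl⟩ := h
  exact ⟨t, p, hp, by rw [sum_cycle_eq_pathWeight_add, h0]⟩

lemma HasZeroCycle.transfer {W G' : Type*} [AddCommGroup G'] {w' : W → W → G'} (φ : G' →+ G)
    {ι : W → V} (hι : Function.Injective ι) (f : W → G)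
    (hw : ∀ x y, x ≠ y → φ (w' x y) = w (ι x) (ι y) + f x - f y) (h : HasZeroCycle w') :
    HasZeroCycle w := by
  obtain ⟨m, c, hc, h0⟩ := h
  refine ⟨m, ι ∘ c, hι.comp hc, ?_⟩
  have hstep : ∀ i, w (ι (c i)) (ι (c (i + 1))) =
      φ (w' (c i) (c (i + 1))) + (f (c (i + 1)) - f (c i)) := by
    intro i
    rw [hw _ _ (hc.ne (by simp))]
    abel
  have htelescope : ∑ i, f (c (i + 1)) = ∑ i, f (c i) := Equiv.sum_comp (Equiv.addRight 1) (f ∘ c)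
  simp only [Function.comp_apply, hstep, sum_add_distrib, ← map_sum, h0, map_zero, sum_sub_distrib,
    htelescope, sub_self, add_zero]

lemma hasZeroCycle_of_forall_sub_mem {H : AddSubgroup G} {Z : Finset V} (v : V)
    (hZ : ∀ z ∈ Z, ∀ z' ∈ Z, z ≠ z' → w v z + w z z' - w v z' ∈ H)
    (h : ∀ w' : Z → Z → H, HasZeroCycle w') : HasZeroCycle w := by
  classical
  refine (h fun x y => if hxy : x = y then 0 else
    ⟨_, hZ x x.2 y y.2 (Subtype.coe_injective.ne hxy)⟩).transfer H.subtype
      Subtype.val_injective (fun x => w v x) fun x y hxy => ?_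
  simp only [hxy, dite_false, AddSubgroup.subtype_apply]
  abel

lemma hasZeroCycle_of_card_eq_two [Fintype V] (hG : Nat.card G = 2) (hV : 3 ≤ Fintype.card V) :
    HasZeroCycle w := by
  classical
  by_contra hw
  obtain ⟨g, hg0, hg⟩ := (Nat.card_eq_two_iff' (0 : G)).1 hG
  obtain ⟨a, b, c, hab, hac, hbc⟩ := Fintype.two_lt_card_iff.1 hV
  have two_cycle : ∀ x y, x ≠ y → w x y + w y x = g := fun x y hxy =>
    hg _ fun h0 => hw ((isPathWeight_pair hxy).hasZeroCycle h0)
  have three_cycle : ∀ x y z, x ≠ y → x ≠ z → y ≠ z → w x y + w y z + w z x = g :=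
    fun x y z hxy hxz hyz => hg _ fun h0 =>
      hw (((isPathWeight_pair hxy).snoc (by simp [hxz.symm, hyz.symm])).hasZeroCycle h0)
  -- the two orientations of the triangle together traverse each of its three 2-cycles
  have key : (w a b + w b c + w c a) + (w a c + w c b + w b a) =
      (w a b + w b a) + (w b c + w c b) + (w c a + w a c) := by abel
  rw [three_cycle a b c hab hac hbc, three_cycle a c b hac hab hbc.symm, two_cycle a b hab,
    two_cycle b c hbc, two_cycle c a hac.symm] at key
  exact hg0 (by simpa using key)

end Cycles

lemma AddSubgroup.card_le_card_div_two {G : Type*} [AddGroup G] [Finite G] {H : AddSubgroup G}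
    (hH : H ≠ ⊤) : Nat.card H ≤ Nat.card G / 2 := by
  rw [Nat.le_div_iff_mul_le two_pos, ← H.card_mul_index]
  exact Nat.mul_le_mul_left _ (AddSubgroup.one_lt_index_of_ne_top hH)

lemma Finset.card_lt_card_union_vadd {G : Type*} [AddCommGroup G] [DecidableEq G] {A : Finset G}
    {c₁ c₂ : G} (h : c₂ - c₁ ∉ AddAction.stabilizer G A) :
    #A < #((c₁ +ᵥ A) ∪ (c₂ +ᵥ A)) := by
  have hne : c₂ +ᵥ A ≠ c₁ +ᵥ A := fun heq => h <| AddAction.mem_stabilizer_iff.2 <| by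
    rw [sub_eq_add_neg, add_comm, ← vadd_vadd, heq, vadd_vadd, neg_add_cancel, zero_vadd]
  have hnsub : ¬ c₂ +ᵥ A ⊆ c₁ +ᵥ A := fun hsub =>
    hne (eq_of_subset_of_card_le hsub (by simp only [card_vadd_finset, le_refl]))
  calc #A = #(c₁ +ᵥ A) := (card_vadd_finset c₁ A).symm
    _ < _ := card_lt_card (ssubset_iff_subset_ne.2 ⟨subset_union_left, fun heq =>
      hnsub (heq ▸ subset_union_right)⟩)

section Growth

variable {V G : Type*} [Fintype V] [DecidableEq V] [AddCommGroup G] [DecidableEq G]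
  {w : V → V → G}

lemma exists_isPathWeight_card_lt (hw : ¬ HasZeroCycle w) {u v : V} {S : Finset V}
    {A : Finset G} (hA : A.Nonempty) (hpath : ∀ a ∈ A, IsPathWeight w S u v a)
    (hsub : ∀ H : AddSubgroup G, H ≠ ⊤ → ∀ w' : (Sᶜ : Finset V) → (Sᶜ : Finset V) → H,
      HasZeroCycle w') :
    ∃ (v' : V) (S' : Finset V) (A' : Finset G), #S' ≤ #S + 2 ∧ #A < #A' ∧
      ∀ a ∈ A', IsPathWeight w S' u v' a := by
  by_cases hsplit : ∃ z ∉ S, ∃ z' ∉ S, z ≠ z' ∧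
      w v z + w z z' - w v z' ∉ AddAction.stabilizer G A
  · obtain ⟨z, hz, z', hz', hzz', hstab⟩ := hsplit
    refine ⟨z', insert z' (insert z S), (w v z' +ᵥ A) ∪ ((w v z + w z z') +ᵥ A),
      (card_insert_le _ _).trans (Nat.add_le_add_right (card_insert_le _ _) 1),
      card_lt_card_union_vadd hstab, fun x hx => ?_⟩
    simp only [mem_union, mem_vadd_finset, vadd_eq_add] at hx
    rcases hx with ⟨a, ha, rfl⟩ | ⟨a, ha, rfl⟩
    · rw [add_comm]
      exact ((hpath a ha).snoc hz').mono (insert_subset_insert _ (subset_insert _ _))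
    · rw [add_comm, ← add_assoc]
      exact ((hpath a ha).snoc hz).snoc (by simp [hzz'.symm, hz'])
  · push Not at hsplit
    obtain ⟨a₀, ha₀⟩ := hA
    have hclose : -w v u ∉ A := fun h => hw ((hpath _ h).hasZeroCycle (neg_add_cancel _))
    have hstab : AddAction.stabilizer G A ≠ ⊤ := fun htop => hclose <| by
      have hmem : -w v u - a₀ ∈ AddAction.stabilizer G A := htop ▸ AddSubgroup.mem_top _
      have := (AddAction.mem_stabilizer_finset.1 hmem a₀).2 ha₀
      rwa [vadd_eq_add, sub_add_cancel] at this
    exact (hw (hasZeroCycle_of_forall_sub_mem v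
      (fun z hz z' hz' => hsplit z (mem_compl.1 hz) z' (mem_compl.1 hz')) (hsub _ hstab))).elim

lemma exists_isPathWeight_of_lt_card [Fintype G] (hw : ¬ HasZeroCycle w)
    (hV : 2 ≤ Fintype.card V)
    (hsub : ∀ S : Finset V, #S ≤ 2 * (Fintype.card G - 1) → ∀ H : AddSubgroup G, H ≠ ⊤ →
      ∀ w' : (Sᶜ : Finset V) → (Sᶜ : Finset V) → H, HasZeroCycle w') :
    ∀ j < Fintype.card G, ∃ (u v : V) (S : Finset V) (A : Finset G),
      #S ≤ 2 * (j + 1) ∧ j < #A ∧ ∀ a ∈ A, IsPathWeight w S u v a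
  | 0, _ => by
    obtain ⟨u, v, huv⟩ := Fintype.exists_pair_of_one_lt_card hV
    exact ⟨u, v, {u, v}, {w u v}, card_le_two, by simp, by simpa using isPathWeight_pair huv⟩
  | j + 1, hj => by
    obtain ⟨u, v, S, A, hS, hA, hpath⟩ := exists_isPathWeight_of_lt_card hw hV hsub j (by omega)
    obtain ⟨v', S', A', hS', hA', hpath'⟩ :=
      exists_isPathWeight_card_lt hw (card_pos.1 (by omega)) hpath (hsub S (by omega))
    exact ⟨u, v', S', A', by omega, by omega, hpath'⟩

theorem hasZeroCycle_of_forall_subgroup [Fintype G] (hV : 2 ≤ Fintype.card V)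
    (hsub : ∀ S : Finset V, #S ≤ 2 * (Fintype.card G - 1) → ∀ H : AddSubgroup G, H ≠ ⊤ →
      ∀ w' : (Sᶜ : Finset V) → (Sᶜ : Finset V) → H, HasZeroCycle w') :
    HasZeroCycle w := by
  by_contra hw
  obtain ⟨u, v, _, A, -, hA, hpath⟩ :=
    exists_isPathWeight_of_lt_card hw hV hsub (Fintype.card G - 1) (by simp [Fintype.card_pos])
  have hAuniv : A = univ := eq_univ_of_card A (by have := card_le_univ A; omega)
  exact hw ((hpath (-w v u) (hAuniv ▸ mem_univ _)).hasZeroCycle (neg_add_cancel _))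

end Growth

-- The value at `0` only enters through `cycleBound 1 = 2`: over the trivial group every 2-cycle
-- is a zero cycle.
def cycleBound : ℕ → ℕ
  | 0 => 2
  | 2 => 3
  | q@(_ + 1) => 2 * q - 2 + cycleBound (q / 2)

lemma cycleBound_eq {q : ℕ} (hq : q ≠ 0) (hq2 : q ≠ 2) :
    cycleBound q = 2 * q - 2 + cycleBound (q / 2) := by
  obtain ⟨n, rfl⟩ := Nat.exists_eq_succ_of_ne_zero hq
  exact cycleBound.eq_3 n (by omega)

lemma cycleBound_le_succ (n : ℕ) : cycleBound n ≤ cycleBound (n + 1) := by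
  induction n using Nat.strong_induction_on with
  | _ n ih =>
    match n with
    | 0 | 1 | 2 => simp [cycleBound]
    | n + 3 =>
      rw [cycleBound_eq (q := n + 3) (by omega) (by omega),
        cycleBound_eq (q := n + 4) (by omega) (by omega)]
      have : cycleBound ((n + 3) / 2) ≤ cycleBound ((n + 4) / 2) := by
        rcases (show (n + 4) / 2 = (n + 3) / 2 ∨ (n + 4) / 2 = (n + 3) / 2 + 1 by omega) with h | h
        · rw [h]
        · rw [h]
          exact ih _ (by omega)
      omega

lemma cycleBound_mono : Monotone cycleBound := monotone_nat_of_le_succ cycleBound_le_succ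

lemma two_le_cycleBound (q : ℕ) : 2 ≤ cycleBound q := by
  simpa [cycleBound] using cycleBound_mono q.zero_le

lemma cycleBound_le {q : ℕ} (hq : q ≠ 0) : cycleBound q ≤ 4 * q := by
  induction q using Nat.strong_induction_on with
  | _ q ih =>
    rcases (show q = 1 ∨ q = 2 ∨ 3 ≤ q by omega) with rfl | rfl | hq3
    · simp [cycleBound]
    · simp [cycleBound]
    · have := ih (q / 2) (by omega) (by omega)
      rw [cycleBound_eq hq (by omega)]
      omega

open Real in
lemma cycleBound_le_ceil {q : ℕ} (hq : 2 ≤ q) : cycleBound q ≤ ⌈2 * q * log q⌉₊ := by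
  suffices h : ((cycleBound q - 1 : ℕ) : ℝ) < 2 * q * log q by
    have := Nat.add_one_le_ceil_iff.2 h
    have := two_le_cycleBound q
    omega
  have hlog2 := log_two_gt_d9
  have hlog3 : 1 < log 3 := by
    rw [lt_log_iff_exp_lt (by norm_num)]
    linarith [exp_one_lt_d9]
  have hlog6 : log 6 = log 2 + log 3 := by
    rw [← log_mul (by norm_num) (by norm_num)]
    norm_num
  rcases lt_or_ge q 8 with hq8 | hq8
  · interval_cases q <;> norm_num [cycleBound]
    · linarith
    · linarith
    · rw [show (4 : ℝ) = 2 ^ 2 by norm_num, log_pow]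
      norm_num
      linarith
    · linarith [log_le_log (by norm_num) (show (3 : ℝ) ≤ 5 by norm_num)]
    · linarith
    · linarith [log_le_log (by norm_num) (show (6 : ℝ) ≤ 7 by norm_num)]
  · have hlogq : 2 < log q := by
      have : log 8 ≤ log q := log_le_log (by norm_num) (by exact_mod_cast hq8)
      rw [show (8 : ℝ) = 2 ^ 3 by norm_num, log_pow] at this
      push_cast at this
      linarith
    have hbound : ((cycleBound q - 1 : ℕ) : ℝ) ≤ 4 * q := by
      have := cycleBound_le (q := q) (by omega)
      exact_mod_cast (show cycleBound q - 1 ≤ 4 * q by omega)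
    have := mul_lt_mul_of_pos_left hlogq (by positivity : (0 : ℝ) < 2 * q)
    linarith

theorem hasZeroCycle_of_cycleBound_le {G V : Type*} [AddCommGroup G] [Finite G] [Fintype V]
    (w : V → V → G) (hV : cycleBound (Nat.card G) ≤ Fintype.card V) : HasZeroCycle w := by
  induction hq : Nat.card G using Nat.strong_induction_on generalizing G V with
  | _ q ih =>
  classical
  cases nonempty_fintype G
  rcases eq_or_ne q 2 with rfl | hq2
  · have : cycleBound 2 = 3 := by simp [cycleBound]
    exact hasZeroCycle_of_card_eq_two hq (by rwa [hq, this] at hV)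
  have hq0 : q ≠ 0 := hq ▸ Nat.card_pos.ne'
  refine hasZeroCycle_of_forall_subgroup ((two_le_cycleBound _).trans hV) fun S hS H hH w' => ?_
  have hH2 : Nat.card H ≤ q / 2 := hq ▸ H.card_le_card_div_two hH
  refine ih _ (by omega) w' ?_ rfl
  rw [Fintype.card_coe, card_compl]
  have := cycleBound_mono hH2
  rw [hq, cycleBound_eq hq0 hq2] at hV
  rw [← Nat.card_eq_fintype_card, hq] at hS
  omega

/-- Let `q ≥ 2` and let `Γ` be a complete digraph on `⌈2 q ln q⌉` vertices (so every
ordered pair of distinct vertices carries a weight `w u v ∈ ℤ/q`).  Then `Γ` contains a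
directed cycle (a cyclic sequence of at least two distinct vertices) whose total weight
is divisible by `q`. -/
theorem complete_digraph_zero_weight_cycle
    (q : ℕ) (hq : 2 ≤ q) (V : Type) [Fintype V]
    (hV : Fintype.card V = ⌈2 * (q : ℝ) * Real.log q⌉₊)
    (w : V → V → ZMod q) :
    ∃ (m : ℕ) (c : Fin (m + 2) → V), Function.Injective c ∧
      ∑ i : Fin (m + 2), w (c i) (c (i + 1)) = 0 := by
  have : NeZero q := ⟨by omega⟩
  exact hasZeroCycle_of_cycleBound_le w (by rw [Nat.card_zmod, hV]; exact cycleBound_le_ceil hq)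
end

section
/- Let q ≥ 2 be an integer and let Γ = (V,E) be a complete digraph on N = ⌈2q·ln q⌉ vertices whose edges carry weights w(e) ∈ ℤ/qℤ. Then there exists a labeling c : V → ℤ/qℤ such that every vertex u ∈ V has an outneighbor v with c(v) = c(u) + w(u,v). -/
/-!
A union bound. For a fixed vertex `u`, a labeling in which `u` has no good outneighbor is
determined by `c u` and by the `N - 1` nonzero values `c v - c u - w u v`, so there are at most
`q (q - 1) ^ (N - 1)` of them. Hence a good labeling exists as soon as
`N (q - 1) ^ (N - 1) < q ^ (N - 1)`. Since `(1 - 1/q) ^ (N - 1) ≤ exp (-(N - 1)/q)`, this follows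
from `log N < (N - 1)/q`, which holds for `N ≥ 2 q log q` when `q ≥ 4`; for `q = 2, 3` the
inequality is checked at `N = 3, 7`.
-/

open Real Finset Fintype

section UnionBound

variable {V G : Type*} [Fintype V] [DecidableEq V] [AddCommGroup G] [Fintype G] [DecidableEq G]

theorem card_filter_forall_ne_add_le (u : V) (w : V → G) :
    #{c : V → G | ∀ v ≠ u, c v ≠ c u + w v} ≤ card G * (card G - 1) ^ (card V - 1) := by
  set s : Finset (V → G) := {c | ∀ v ≠ u, c v ≠ c u + w v}
  let f : s → G × ({v // v ≠ u} → {x : G // x ≠ 0}) := fun c =>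
    (c.1 u, fun v => ⟨c.1 v - c.1 u - w v,
      sub_sub (c.1 v) _ _ ▸ sub_ne_zero.2 ((mem_filter.1 c.2).2 v v.2)⟩)
  have hf : Function.Injective f := by
    intro c d hcd
    obtain ⟨hu, hv⟩ := Prod.ext_iff.1 hcd
    ext v
    by_cases hvu : v = u
    · exact hvu ▸ hu
    · have := congrArg Subtype.val (congrFun hv ⟨v, hvu⟩)
      simp only [f] at this hu
      simpa [hu] using this
  calc #s = Fintype.card s := (card_coe s).symm
    _ ≤ _ := card_le_of_injective f hf
    _ = card G * (card G - 1) ^ (card V - 1) := by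
      simp [card_subtype_compl]

theorem exists_forall_exists_ne_eq_add (w : V → V → G)
    (h : card V * (card G - 1) ^ (card V - 1) < card G ^ (card V - 1)) :
    ∃ c : V → G, ∀ u, ∃ v, v ≠ u ∧ c v = c u + w u v := by
  by_contra! hbad
  obtain ⟨u₀, -⟩ := hbad 0
  obtain ⟨n, hn⟩ : ∃ n, card V = n + 1 := Nat.exists_eq_add_one.2 (card_pos_iff.2 ⟨u₀⟩)
  have hcover : (univ : Finset (V → G)) ⊆
      univ.biUnion fun u => {c : V → G | ∀ v ≠ u, c v ≠ c u + w u v} := by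
    intro c _
    obtain ⟨u, hu⟩ := hbad c
    simpa using ⟨u, hu⟩
  have hcount := calc card G ^ card V = #(univ : Finset (V → G)) := by simp
    _ ≤ ∑ u : V, #{c : V → G | ∀ v ≠ u, c v ≠ c u + w u v} :=
      (card_le_card hcover).trans card_biUnion_le
    _ ≤ ∑ _u : V, card G * (card G - 1) ^ (card V - 1) :=
      sum_le_sum fun u _ => card_filter_forall_ne_add_le u (w u)
    _ = card G * (card V * (card G - 1) ^ (card V - 1)) := by
      rw [sum_const, smul_eq_mul, card_univ, mul_left_comm]
  rw [hn, pow_succ', Nat.add_sub_cancel] at hcount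
  rw [hn, Nat.add_sub_cancel] at h
  exact absurd (Nat.le_of_mul_le_mul_left hcount card_pos) h.not_ge

end UnionBound

theorem log_lt_sub_one_div_of_two_mul_mul_log_le {Q x : ℝ} (hQ : 4 ≤ Q)
    (hx : 2 * Q * log Q ≤ x) : log x < (x - 1) / Q := by
  have hlogQ : 1 < log Q := by
    rw [lt_log_iff_exp_lt (by linarith)]
    linarith [exp_one_lt_d9]
  set x₀ := 2 * Q * log Q
  have hQx₀ : Q < x₀ := by nlinarith
  -- `log` lies below its tangent lines at `x₀` and at `1`
  have hlog_x : log x ≤ log x₀ + (x - x₀) / Q := by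
    have h := log_le_sub_one_of_pos (x := x / x₀) (div_pos (by linarith) (by linarith))
    rw [log_div (by linarith) (by linarith)] at h
    have : x / x₀ - 1 ≤ (x - x₀) / Q := by
      rw [div_sub_one (by linarith)]
      exact div_le_div_of_nonneg_left (by linarith) (by linarith) hQx₀.le
    linarith
  have hlog_x₀ : log x₀ ≤ log 2 + 2 * log Q - 1 := by
    have := log_le_sub_one_of_pos (x := log Q) (by linarith)
    rw [show x₀ = 2 * Q * log Q from rfl, log_mul (by positivity) (by linarith),
      log_mul (by norm_num) (by linarith)]
    linarith
  have h1Q : 1 / Q ≤ 1 / 4 := one_div_le_one_div_of_le (by norm_num) hQ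
  have hsplit : (x - 1) / Q = 2 * log Q - 1 / Q + (x - x₀) / Q := by
    field_simp
    ring
  linarith [log_two_lt_d9]

theorem mul_sub_one_pow_lt_pow {q N : ℕ} (hq : 4 ≤ q) (hN : 2 * q * log q ≤ N) :
    N * (q - 1) ^ (N - 1) < q ^ (N - 1) := by
  have hQ : (4 : ℝ) ≤ q := by exact_mod_cast hq
  have hlog := log_lt_sub_one_div_of_two_mul_mul_log_le hQ hN
  obtain ⟨n, rfl⟩ : ∃ n, N = n + 1 := Nat.exists_eq_add_one.2 <| by
    have : 0 < 2 * (q : ℝ) * log q := by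
      have := log_pos (by linarith : (1 : ℝ) < q); positivity
    exact_mod_cast this.trans_le hN
  rw [Nat.add_sub_cancel, ← Nat.cast_lt (α := ℝ)]
  push_cast [Nat.cast_sub (by omega : 1 ≤ q)]
  push_cast at hlog
  rw [add_sub_cancel_right, log_lt_iff_lt_exp (by positivity)] at hlog
  have hstep : (q : ℝ) - 1 ≤ q / exp (1 / q) := calc
    (q : ℝ) - 1 = q * (-(1 / q) + 1) := by field_simp; ring
    _ ≤ q * exp (-(1 / q)) := by gcongr; exact add_one_le_exp _
    _ = q / exp (1 / q) := by rw [exp_neg, ← div_eq_mul_inv]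
  calc ((n + 1) * (q - 1) ^ n : ℝ) ≤ (n + 1) * (q ^ n / exp (n / q)) := by
        rw [← mul_one_div (n : ℝ), exp_nat_mul, ← div_pow]
        gcongr
        linarith
    _ < exp (n / q) * (q ^ n / exp (n / q)) := by gcongr
    _ = q ^ n := by field_simp

theorem natCeil_four_mul_log_two : ⌈4 * log 2⌉₊ = 3 := by
  rw [Nat.ceil_eq_iff (by norm_num)]
  constructor <;> norm_num <;> linarith [log_two_gt_d9, log_two_lt_d9]

theorem natCeil_six_mul_log_three : ⌈6 * log 3⌉₊ = 7 := by
  have hlower : 1 < log 3 := by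
    rw [lt_log_iff_exp_lt (by norm_num)]
    linarith [exp_one_lt_d9]
  have hupper : log (3 ^ 6) ≤ 7 := by
    rw [log_le_iff_le_exp (by norm_num)]
    calc ((3 : ℝ) ^ 6) ≤ 2.7 ^ 7 := by norm_num
      _ ≤ exp 1 ^ 7 := by gcongr; linarith [exp_one_gt_d9]
      _ = exp 7 := by rw [← exp_nat_mul]; norm_num
  rw [log_pow] at hupper
  rw [Nat.ceil_eq_iff (by norm_num)]
  constructor <;> norm_num at hupper ⊢ <;> linarith

theorem natCeil_mul_sub_one_pow_lt_pow {q : ℕ} (hq : 2 ≤ q) :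
    ⌈2 * (q : ℝ) * log q⌉₊ * (q - 1) ^ (⌈2 * (q : ℝ) * log q⌉₊ - 1)
      < q ^ (⌈2 * (q : ℝ) * log q⌉₊ - 1) := by
  rcases lt_or_ge q 4 with hq4 | hq4
  · interval_cases q
    · norm_num [natCeil_four_mul_log_two]
    · norm_num [natCeil_six_mul_log_three]
  · exact mul_sub_one_pow_lt_pow hq4 (Nat.le_ceil _)

/-- Let `q ≥ 2` and let `Γ` be a complete digraph on `⌈2 q ln q⌉` vertices with edge
weights `w u v ∈ ℤ/q`.  Then there is a labeling `c` of the vertices by elements of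
`ℤ/q` such that every vertex `u` has an outneighbor `v` with `c v = c u + w u v`. -/
theorem complete_digraph_good_labeling
    (q : ℕ) (hq : 2 ≤ q) (V : Type) [Fintype V]
    (hV : Fintype.card V = ⌈2 * (q : ℝ) * Real.log q⌉₊)
    (w : V → V → ZMod q) :
    ∃ c : V → ZMod q, ∀ u : V, ∃ v : V, v ≠ u ∧ c v = c u + w u v := by
  classical
  have : NeZero q := ⟨by omega⟩
  apply exists_forall_exists_ne_eq_add w
  rw [hV, ZMod.card]
  exact natCeil_mul_sub_one_pow_lt_pow hq
end

section
/- Let q be a prime and let Γ = (V,E) be a complete digraph on 2q−1 vertices whose edges carry weights w(e) ∈ ℤ/qℤ, and suppose that there is no pair of distinct vertices u, v with w(u,v) = −w(v,u) in ℤ/qℤ. Then for every integer k with 0 ≤ k < q there exist distinct vertices x₀, x₁, y₁, x₂, y₂, …, x_k, y_k in Γ and a set S ⊆ ℤ/qℤ of k+1 distinct residues such that for every s ∈ S there is a directed path P_s from x₀ to x_k of total weight s modulo q, where P_s is the concatenation of k subpaths p₁, p₂, …, p_k in this order, and each p_i is either the single edge x_{i−1}x_i or the two-edge path x_{i−1}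 y_i x_i. -/
/-!
For a vertex `z` and distinct vertices `a`, `b`, at least one of the detours `a → b → z`,
`b → a → z` has a weight different from that of the corresponding direct edge: otherwise, adding
the two equalities gives `w a b + w b a = 0`. Picking two fresh vertices per step in this way, each
of the `k` steps offers two distinct weights, and by the Cauchy–Davenport theorem the sumset of
`k` two-element subsets of `ℤ/q` has at least `min q (k + 1) = k + 1` elements.
-/

open Finset Function
open scoped Pointwise

theorem ZMod.min_le_card_sum_pair {p : ℕ} (hp : p.Prime) {ι : Type*} (s : Finset ι)
    (a b : ι → ZMod p) (hab : ∀ i ∈ s, a i ≠ b i) :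
    min p (#s + 1) ≤ #(∑ i ∈ s, ({a i, b i} : Finset (ZMod p))) := by
  classical
  induction s using Finset.induction_on with
  | empty => simp
  | insert j s hj ih =>
    have hpair : #({a j, b j} : Finset (ZMod p)) = 2 :=
      card_pair (hab j (mem_insert_self j s))
    have hrest := ih fun i hi => hab i (mem_insert_of_mem hi)
    have hne : (∑ i ∈ s, ({a i, b i} : Finset (ZMod p))).Nonempty :=
      card_pos.1 (by have := hp.two_le; omega)
    have hcd := ZMod.cauchy_davenport hp (insert_nonempty (a j) {b j}) hne
    rw [sum_insert hj, card_insert_of_notMem hj]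
    omega

theorem Finset.exists_bool_of_mem_sum_pair {M ι : Type*} [AddCommMonoid M] [DecidableEq M]
    [Fintype ι] {a b : ι → M} {t : M} (ht : t ∈ ∑ i, ({a i, b i} : Finset M)) :
    ∃ ε : ι → Bool, ∑ i, (if ε i then a i else b i) = t := by
  rw [← mem_coe, coe_sum, Set.mem_fintype_sum] at ht
  obtain ⟨g, hg, rfl⟩ := ht
  refine ⟨fun i => g i = a i, sum_congr rfl fun i _ => ?_⟩
  have hgi : g i = a i ∨ g i = b i := by simpa using hg i
  rcases hgi with h | h <;> split_ifs <;> simp_all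

theorem add_ne_or_add_ne_of_ne_neg {V G : Type*} [AddCommGroup G] (w : V → V → G) {a b : V}
    (z : V) (hab : w a b ≠ -w b a) :
    w a b + w b z ≠ w a z ∨ w b a + w a z ≠ w b z := by
  by_contra! h
  refine hab (eq_neg_of_add_eq_zero_left ?_)
  calc w a b + w b a = (w a b + w b z) + (w b a + w a z) - (w a z + w b z) := by abel
    _ = 0 := by rw [h.1, h.2, sub_eq_zero, add_comm]

theorem Function.Injective.sumElim_cons {α : Type*} {m n : ℕ} {x : Fin m → α} {y : Fin n → α}
    (h : Injective (Sum.elim x y)) {a b : α} (hab : a ≠ b) (ha : a ∉ Set.range (Sum.elim x y))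
    (hb : b ∉ Set.range (Sum.elim x y)) :
    Injective (Sum.elim (Fin.cons a x : Fin (m + 1) → α) (Fin.cons b y)) := by
  simp only [Set.mem_range, Sum.exists, Sum.elim_inl, Sum.elim_inr, not_or, not_exists] at ha hb
  have hxy : ∀ i j, x i ≠ y j := fun i j hij => Sum.inl_ne_inr (h hij)
  refine Injective.sumElim (Fin.cons_injective_of_injective ?_ (h.comp Sum.inl_injective))
    (Fin.cons_injective_of_injective ?_ (h.comp Sum.inr_injective)) fun i j => ?_
  · simpa using ha.1
  · simpa using hb.2
  · cases i using Fin.cases <;> cases j using Fin.cases <;>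
      simp [hab, hb.1, Ne.symm (ha.2 _), hxy]

theorem exists_ne_notMem_range_of_card_add_two_le {α ι : Type*} [Fintype α] [Fintype ι]
    (f : ι → α) (h : Fintype.card ι + 2 ≤ Fintype.card α) :
    ∃ a b, a ≠ b ∧ a ∉ Set.range f ∧ b ∉ Set.range f := by
  classical
  have hcard : 1 < #(univ.image f)ᶜ := by
    have := card_image_le (s := univ) (f := f)
    rw [card_compl]; simp only [card_univ] at this; omega
  obtain ⟨a, ha, b, hb, hab⟩ := one_lt_card.1 hcard
  exact ⟨a, b, hab, by simpa using ha, by simpa using hb⟩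

theorem exists_path_with_detours {V G : Type*} [Fintype V] [AddCommGroup G] (w : V → V → G)
    (hw : ∀ u v, u ≠ v → w u v ≠ -w v u) (k : ℕ) (hk : 2 * k + 1 ≤ Fintype.card V) :
    ∃ (x : Fin (k + 1) → V) (y : Fin k → V), Injective (Sum.elim x y) ∧
      ∀ i : Fin k, w (x i.castSucc) (y i) + w (y i) (x i.succ) ≠ w (x i.castSucc) (x i.succ) := by
  induction k with
  | zero =>
    obtain ⟨v⟩ : Nonempty V := Fintype.card_pos_iff.1 (by omega)
    refine ⟨fun _ => v, finZeroElim, ?_, fun i => i.elim0⟩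
    rintro (i | i) (j | j) _
    exacts [congrArg Sum.inl (Fin.ext (by omega)), j.elim0, i.elim0, i.elim0]
  | succ k ih =>
    obtain ⟨x, y, hinj, hdetour⟩ := ih (by omega)
    obtain ⟨a, b, hab, ha, hb⟩ := exists_ne_notMem_range_of_card_add_two_le (Sum.elim x y)
      (by simp only [Fintype.card_sum, Fintype.card_fin]; omega)
    -- Building the path backwards, the new first step is `a → b → x 0` or `b → a → x 0`.
    obtain ⟨a, b, hab, ha, hb, hstep⟩ : ∃ a b, a ≠ b ∧ a ∉ Set.range (Sum.elim x y) ∧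
        b ∉ Set.range (Sum.elim x y) ∧ w a b + w b (x 0) ≠ w a (x 0) := by
      rcases add_ne_or_add_ne_of_ne_neg w (x 0) (hw a b hab) with h | h
      exacts [⟨a, b, hab, ha, hb, h⟩, ⟨b, a, hab.symm, hb, ha, h⟩]
    refine ⟨Fin.cons a x, Fin.cons b y, hinj.sumElim_cons hab ha hb, fun i => ?_⟩
    cases i using Fin.cases with
    | zero => simpa using hstep
    | succ i => simpa [← Fin.succ_castSucc] using hdetour i

/-- Let `q` be a prime and `Γ` a complete digraph on `2q - 1` vertices with edge weights
in `ℤ/q`, such that no two distinct vertices `u, v` satisfy `w u v = - w v u`.  Then for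
every `k < q` there are distinct vertices `x₀, x₁, y₁, …, x_k, y_k` and a set `S` of
`k + 1` residues modulo `q` such that for every `s ∈ S` there is a directed path from
`x₀` to `x_k` of total weight `s`, consisting of `k` consecutive subpaths, the `i`-th of
which is either the single edge `x_{i-1} x_i` or the two-edge path `x_{i-1} y_i x_i`. -/
theorem complete_digraph_many_path_weights
    (q : ℕ) (hq : q.Prime) (V : Type) [Fintype V]
    (hV : Fintype.card V = 2 * q - 1)
    (w : V → V → ZMod q)
    (hw : ∀ u v : V, u ≠ v → w u v ≠ - w v u)
    (k : ℕ) (hk : k < q) :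
    ∃ (x : Fin (k + 1) → V) (y : Fin k → V),
      Function.Injective (Sum.elim x y) ∧
      ∃ S : Finset (ZMod q), S.card = k + 1 ∧
        ∀ s ∈ S, ∃ ε : Fin k → Bool,
          ∑ i : Fin k,
            (if ε i then w (x i.castSucc) (y i) + w (y i) (x i.succ)
             else w (x i.castSucc) (x i.succ)) = s := by
  obtain ⟨x, y, hinj, hdetour⟩ := exists_path_with_detours w hw k (by omega)
  have hsums := ZMod.min_le_card_sum_pair hq univ
    (fun i : Fin k => w (x i.castSucc) (y i) + w (y i) (x i.succ))
    (fun i => w (x i.castSucc) (x i.succ)) fun i _ => hdetour i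
  rw [card_univ, Fintype.card_fin, min_eq_right hk] at hsums
  obtain ⟨S, hS, hScard⟩ := exists_subset_card_eq hsums
  exact ⟨x, y, hinj, S, hScard, fun s hs => exists_bool_of_mem_sum_pair (hS hs)⟩
end

section
/- For every positive integers f and q, there exists a graph G of maximum degree 3 that contains the complete graph K_f as a minor and in which every path between two vertices of degree 3 has length divisible by q. Consequently, such a graph G contains no subdivision of any graph H with maximum degree greater than 3. -/
open SimpleGraph

/-- A graph `G` contains the complete graph `K_n` as a minor. -/
def HasCliqueMinor {V : Type*} (G : SimpleGraph V) (n : ℕ) : Prop :=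
  ∃ B : Fin n → Set V,
    (∀ i, (B i).Nonempty) ∧
    (∀ i, (G.induce (B i)).Connected) ∧
    (∀ i j, i ≠ j → Disjoint (B i) (B j)) ∧
    (∀ i j, i ≠ j → ∃ u ∈ B i, ∃ v ∈ B j, G.Adj u v)

/-- `G` contains a subdivision of `H`: there is an injective choice of branch vertices
and, for each edge of `H`, a path in `G` between the corresponding branch vertices whose
internal vertices avoid all branch vertices, paths corresponding to distinct edges of
`H` being internally disjoint. -/
def HasSubdivision {W V : Type*} (H : SimpleGraph W) (G : SimpleGraph V) : Prop :=
  ∃ b : W → V, Function.Injective b ∧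
    ∃ P : ∀ ⦃u v : W⦄, H.Adj u v → G.Walk (b u) (b v),
      (∀ ⦃u v : W⦄ (h : H.Adj u v), (P h).IsPath) ∧
      (∀ ⦃u v : W⦄ (h : H.Adj u v), P h.symm = (P h).reverse) ∧
      (∀ ⦃u v : W⦄ (h : H.Adj u v), ∀ x ∈ (P h).support,
        x ≠ b u → x ≠ b v → ∀ z : W, x ≠ b z) ∧
      (∀ ⦃u v u' v' : W⦄ (h : H.Adj u v) (h' : H.Adj u' v'), s(u, v) ≠ s(u', v') →
        ∀ x ∈ (P h).support, x ∈ (P h').support → x = b u ∨ x = b v)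

/-!
Replace every edge of a graph `B` by a path of length `q`. The interior vertices of these paths
have degree `2`, so a path between two vertices of degree `3` runs between original vertices
and, unable to turn around inside an edge path, is a concatenation of whole edge paths: its
length is a multiple of `q`. Subdividing keeps the degrees of the original vertices and every
clique minor (the interior of an edge path joins the branch set of its smaller endpoint). For
`B` take the `m × m` grid whose rows are paths and in which `(i, j)` is joined to `(j, i)`: it
has maximum degree `3`, and its rows are the branch sets of a `K_m` minor. Finally, a
subdivision of `H` maps the edges at a vertex of `H` to internally disjoint paths leaving
through distinct neighbours, so it needs a vertex of at least that degree.
-/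

namespace SimpleGraph

variable {V : Type*} [LinearOrder V]

/-- The point at distance `i` from `x` on the path of length `n + 1` replacing the edge `xy`.
Interior points are stored under the ordered pair `(min x y, max x y)`, so that
`edgePoint n y x i = edgePoint n x y (n + 1 - i)`. -/
def edgePoint (n : ℕ) (x y : V) (i : ℕ) : V ⊕ (V × V × Fin n) :=
  if h₀ : i = 0 then .inl x
  else if h : n < i then .inl y
  else if x < y then .inr (x, y, ⟨i - 1, by omega⟩) else .inr (y, x, ⟨n - i, by omega⟩)

variable {n : ℕ} {x y a b : V} {i j : ℕ}

@[simp] lemma edgePoint_zero : edgePoint n x y 0 = .inl x := rfl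

lemma edgePoint_of_lt (h : n < i) : edgePoint n x y i = .inl y := by
  simp [edgePoint, h, Nat.ne_zero_of_lt h]

lemma edgePoint_add_one_of_lt (hxy : x < y) (k : Fin n) :
    edgePoint n x y (k + 1) = .inr (x, y, k) := by
  simp [edgePoint, hxy, k.isLt]

lemma edgePoint_ne_inl (hi : 0 < i) (hin : i ≤ n) (z : V) : edgePoint n x y i ≠ .inl z := by
  unfold edgePoint
  split_ifs <;> simp <;> omega

lemma edgePoint_swap (hxy : x ≠ y) : edgePoint n y x i = edgePoint n x y (n + 1 - i) := by
  unfold edgePoint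
  rcases hxy.lt_or_gt with h | h <;> split_ifs <;> simp_all [Fin.ext_iff] <;>
    first | omega | exact absurd h (lt_asymm ‹_›)

lemma edgePoint_ne_edgePoint_add_one (hxy : x ≠ y) (hi : i ≤ n) :
    edgePoint n x y i ≠ edgePoint n x y (i + 1) := by
  unfold edgePoint
  rcases hxy.lt_or_gt with h | h <;> split_ifs <;> simp_all [Fin.ext_iff] <;> omega

lemma edgePoint_eq_edgePoint_iff (hi : 0 < i) (hin : i ≤ n) (hj : 0 < j) (hjn : j ≤ n)
    (hab : a ≠ b) :
    edgePoint n x y i = edgePoint n a b j ↔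
      (x = a ∧ y = b ∧ i = j) ∨ (x = b ∧ y = a ∧ i + j = n + 1) := by
  constructor
  · intro h
    unfold edgePoint at h
    rcases hab.lt_or_gt with hab | hab <;> split_ifs at h <;> simp_all [Fin.ext_iff] <;> omega
  · rintro (⟨rfl, rfl, rfl⟩ | ⟨rfl, rfl, hij⟩)
    · rfl
    · rw [edgePoint_swap hab.symm]
      congr 1
      omega

/-- Every edge `xy` of `B` is replaced by a path of length `n + 1`. The vertices
`inr (x, y, k)` with `¬ x < y` or `¬ B.Adj x y` are isolated. -/
def subdivide (B : SimpleGraph V) (n : ℕ) : SimpleGraph (V ⊕ (V × V × Fin n)) where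
  Adj u w :=
    ∃ x y i, B.Adj x y ∧ i ≤ n ∧ u = edgePoint n x y i ∧ w = edgePoint n x y (i + 1)
  symm := ⟨by
    rintro u w ⟨x, y, i, hxy, hi, rfl, rfl⟩
    refine ⟨y, x, n - i, hxy.symm, by omega, ?_, ?_⟩ <;>
      rw [edgePoint_swap hxy.ne] <;> congr 1 <;> omega⟩
  loopless := ⟨by
    rintro u ⟨x, y, i, hxy, hi, rfl, h⟩
    exact edgePoint_ne_edgePoint_add_one hxy.ne hi h⟩

variable {B : SimpleGraph V}

lemma subdivide_adj_edgePoint (hxy : B.Adj x y) (hi : i ≤ n) :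
    (B.subdivide n).Adj (edgePoint n x y i) (edgePoint n x y (i + 1)) :=
  ⟨x, y, i, hxy, hi, rfl, rfl⟩

lemma subdivide_adj_edgePoint_inl (hxy : B.Adj x y) :
    (B.subdivide n).Adj (edgePoint n x y n) (.inl y) := by
  rw [← edgePoint_of_lt (x := x) n.lt_succ_self]
  exact subdivide_adj_edgePoint hxy le_rfl

lemma exists_eq_edgePoint_one_of_subdivide_adj_inl {w} (h : (B.subdivide n).Adj (.inl x) w) :
    ∃ y, B.Adj x y ∧ w = edgePoint n x y 1 := by
  obtain ⟨a, b, j, hab, hj, hu, rfl⟩ := h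
  obtain rfl : j = 0 := by
    by_contra hj0
    exact edgePoint_ne_inl (Nat.pos_of_ne_zero hj0) hj x hu.symm
  obtain rfl : x = a := by simpa using hu
  exact ⟨b, hab, rfl⟩

lemma eq_edgePoint_of_subdivide_adj (hi : 0 < i) (hin : i ≤ n) {w}
    (h : (B.subdivide n).Adj (edgePoint n x y i) w) :
    w = edgePoint n x y (i - 1) ∨ w = edgePoint n x y (i + 1) := by
  obtain ⟨a, b, j, hab, hj, hu, rfl⟩ := h
  have hj0 : 0 < j := Nat.pos_of_ne_zero <| by rintro rfl; exact edgePoint_ne_inl hi hin a hu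
  rcases (edgePoint_eq_edgePoint_iff hi hin hj0 hj hab.ne).mp hu with
    ⟨rfl, rfl, rfl⟩ | ⟨rfl, rfl, hij⟩
  · exact .inr rfl
  · left
    rw [edgePoint_swap hab.ne]
    congr 1
    omega

lemma exists_eq_edgePoint_of_subdivide_adj_inr {e w} (h : (B.subdivide n).Adj (.inr e) w) :
    ∃ x y i, 0 < i ∧ i ≤ n ∧ .inr e = edgePoint n x y i := by
  obtain ⟨x, y, i, -, hi, hu, -⟩ := h
  refine ⟨x, y, i, Nat.pos_of_ne_zero ?_, hi, hu⟩
  rintro rfl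
  simp at hu

lemma neighborSet_subdivide_inl :
    (B.subdivide n).neighborSet (.inl x) = (edgePoint n x · 1) '' B.neighborSet x := by
  ext w
  constructor
  · intro h
    obtain ⟨y, hy, rfl⟩ := exists_eq_edgePoint_one_of_subdivide_adj_inl h
    exact ⟨y, hy, rfl⟩
  · rintro ⟨y, hy, rfl⟩
    exact subdivide_adj_edgePoint (i := 0) hy n.zero_le

lemma ncard_neighborSet_subdivide_inl :
    ((B.subdivide n).neighborSet (.inl x)).ncard = (B.neighborSet x).ncard := by
  rw [neighborSet_subdivide_inl]
  refine Set.InjOn.ncard_image fun y hy y' hy' h => ?_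
  rcases Nat.eq_zero_or_pos n with rfl | hn
  · simpa [edgePoint_of_lt] using h
  · rcases (edgePoint_eq_edgePoint_iff one_pos hn one_pos hn (B.ne_of_adj hy')).mp h with
      ⟨-, h, -⟩ | ⟨h, -⟩
    · exact h
    · exact absurd h (B.ne_of_adj hy')

lemma ncard_neighborSet_subdivide_inr_le (e : V × V × Fin n) :
    ((B.subdivide n).neighborSet (.inr e)).ncard ≤ 2 := by
  rcases ((B.subdivide n).neighborSet (.inr e)).eq_empty_or_nonempty with h | ⟨w, hw⟩
  · simp [h]
  obtain ⟨x, y, i, hi, hin, he⟩ := exists_eq_edgePoint_of_subdivide_adj_inr hw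
  rw [he]
  calc ((B.subdivide n).neighborSet (edgePoint n x y i)).ncard
      ≤ ({edgePoint n x y (i - 1), edgePoint n x y (i + 1)} : Set _).ncard :=
        Set.ncard_le_ncard fun w hw => eq_edgePoint_of_subdivide_adj hi hin hw
    _ ≤ 2 := (Set.ncard_insert_le _ _).trans (by simp)

lemma exists_eq_inl_of_two_lt_ncard_neighborSet {w : V ⊕ (V × V × Fin n)}
    (h : 2 < ((B.subdivide n).neighborSet w).ncard) : ∃ x, w = .inl x := by
  rcases w with x | e
  · exact ⟨x, rfl⟩
  · exact absurd (ncard_neighborSet_subdivide_inr_le e) h.not_ge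

lemma ncard_neighborSet_subdivide_le {d : ℕ} (hd : 2 ≤ d)
    (hB : ∀ v, (B.neighborSet v).ncard ≤ d) (w : V ⊕ (V × V × Fin n)) :
    ((B.subdivide n).neighborSet w).ncard ≤ d := by
  rcases w with v | e
  · exact ncard_neighborSet_subdivide_inl.trans_le (hB v)
  · exact (ncard_neighborSet_subdivide_inr_le e).trans hd

/-- A path that has entered the edge path of `xy` from the side of `x` has to run through to
`y`, since interior vertices have no other neighbours. -/
lemma subdivide_dvd_length_add_of_isPath {u v} (p : (B.subdivide n).Walk u v) (hp : p.IsPath)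
    (hv : v.isLeft) (x y : V) (i : ℕ) (hin : i ≤ n) (hu : u = edgePoint n x y i)
    (hback : 0 < i → edgePoint n x y (i - 1) ∉ p.support) : n + 1 ∣ p.length + i := by
  induction p generalizing x y i with
  | nil =>
    obtain ⟨b, rfl⟩ := Sum.isLeft_iff.mp hv
    obtain rfl : i = 0 := by
      by_contra hi
      exact edgePoint_ne_inl (Nat.pos_of_ne_zero hi) hin b hu.symm
    simp
  | @cons u w v h p ih =>
    subst hu
    rw [Walk.cons_isPath_iff] at hp
    obtain ⟨y', rfl, hy'⟩ :
        ∃ y', w = edgePoint n x y' (i + 1) ∧ edgePoint n x y' i = edgePoint n x y i := by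
      rcases Nat.eq_zero_or_pos i with rfl | hi
      · obtain ⟨y', -, hw⟩ := exists_eq_edgePoint_one_of_subdivide_adj_inl h
        exact ⟨y', hw, rfl⟩
      · rcases eq_edgePoint_of_subdivide_adj hi hin h with hw | hw
        · exact absurd (hw ▸ List.mem_cons_of_mem _ p.start_mem_support) (hback hi)
        · exact ⟨y, hw, rfl⟩
    rw [Walk.length_cons]
    rcases hin.lt_or_eq with hin | hin
    · have := ih hp.1 hv x y' (i + 1) hin rfl (fun _ => hy' ▸ hp.2)
      rwa [add_right_comm, add_assoc]
    · have := ih hp.1 hv y' x 0 (Nat.zero_le _) (edgePoint_of_lt (by omega))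
        (absurd · (lt_irrefl 0))
      rw [show p.length + 1 + i = p.length + (n + 1) by omega]
      exact dvd_add (by simpa using this) dvd_rfl

lemma subdivide_dvd_length_of_isPath (p : (B.subdivide n).Walk (.inl a) (.inl b))
    (hp : p.IsPath) : n + 1 ∣ p.length := by
  simpa using subdivide_dvd_length_add_of_isPath p hp rfl a a 0 (Nat.zero_le _) rfl
    (absurd · (lt_irrefl 0))

lemma exists_walk_edgePoint (hxy : B.Adj x y) :
    ∀ i ≤ n + 1, ∃ p : (B.subdivide n).Walk (.inl x) (edgePoint n x y i),
      ∀ w ∈ p.support, ∃ j ≤ i, w = edgePoint n x y j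
  | 0, _ => ⟨.nil, by simp⟩
  | i + 1, hi => by
    obtain ⟨p, hp⟩ := exists_walk_edgePoint hxy i (by omega)
    refine ⟨p.concat (subdivide_adj_edgePoint hxy (by omega)), fun w hw => ?_⟩
    rw [Walk.support_concat, List.mem_append, List.mem_singleton] at hw
    rcases hw with hw | rfl
    · obtain ⟨j, hj, rfl⟩ := hp w hw
      exact ⟨j, by omega, rfl⟩
    · exact ⟨i + 1, le_rfl, rfl⟩

def subdivisionSet (B : SimpleGraph V) (n : ℕ) (S : Set V) : Set (V ⊕ (V × V × Fin n)) :=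
  {w | Sum.elim (· ∈ S) (fun e => e.1 ∈ S ∧ e.1 < e.2.1 ∧ B.Adj e.1 e.2.1) w}

variable {S T : Set V}

lemma edgePoint_mem_subdivisionSet (hx : x ∈ S) (hxy : x < y) (hadj : B.Adj x y) (hi : i ≤ n) :
    edgePoint n x y i ∈ subdivisionSet B n S := by
  unfold edgePoint
  split_ifs
  · exact hx
  · omega
  · exact ⟨hx, hxy, hadj⟩

lemma reachable_induce_subdivisionSet_edgePoint (hx : x ∈ S) (hxy : x < y) (hadj : B.Adj x y)
    (hi : i ≤ n) :
    ((B.subdivide n).induce (subdivisionSet B n S)).Reachable ⟨.inl x, hx⟩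
      ⟨edgePoint n x y i, edgePoint_mem_subdivisionSet hx hxy hadj hi⟩ := by
  obtain ⟨p, hp⟩ := exists_walk_edgePoint (n := n) hadj i (by omega)
  refine ⟨p.induce _ fun w hw => ?_⟩
  obtain ⟨j, hj, rfl⟩ := hp w hw
  exact edgePoint_mem_subdivisionSet hx hxy hadj (hj.trans hi)

lemma reachable_induce_subdivisionSet_inl (hx : x ∈ S) (hy : y ∈ S) (hadj : B.Adj x y) :
    ((B.subdivide n).induce (subdivisionSet B n S)).Reachable ⟨.inl x, hx⟩
      ⟨.inl y, hy⟩ := by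
  wlog hxy : x < y generalizing x y
  · exact (this hy hx hadj.symm (hadj.ne.symm.lt_of_le (not_lt.mp hxy))).symm
  exact (reachable_induce_subdivisionSet_edgePoint hx hxy hadj le_rfl).trans
    (Adj.reachable (subdivide_adj_edgePoint_inl hadj))

lemma connected_induce_subdivisionSet (h : (B.induce S).Connected) :
    ((B.subdivide n).induce (subdivisionSet B n S)).Connected := by
  have reach_inl : ∀ a b : S, (B.induce S).Walk a b →
      ((B.subdivide n).induce (subdivisionSet B n S)).Reachable
        ⟨.inl a, a.2⟩ ⟨.inl b, b.2⟩ := by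
    intro a b p
    induction p with
    | nil => rfl
    | cons hadj _ ih =>
      exact (reachable_induce_subdivisionSet_inl (B := B) _ _ hadj).trans ih
  obtain ⟨x₀, hx₀⟩ := h.nonempty.some
  rw [connected_iff_exists_forall_reachable]
  refine ⟨⟨.inl x₀, hx₀⟩, ?_⟩
  rintro ⟨v | ⟨x, y, k⟩, hw⟩
  · exact reach_inl ⟨x₀, hx₀⟩ ⟨v, hw⟩ (h.preconnected _ _).some
  · obtain ⟨hx, hxy, hadj⟩ := hw
    have := reachable_induce_subdivisionSet_edgePoint hx hxy hadj (i := k + 1) k.isLt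
    simp only [edgePoint_add_one_of_lt hxy] at this
    exact (reach_inl ⟨x₀, hx₀⟩ ⟨x, hx⟩ (h.preconnected _ _).some).trans this

lemma disjoint_subdivisionSet (h : Disjoint S T) :
    Disjoint (subdivisionSet B n S) (subdivisionSet B n T) := by
  rw [Set.disjoint_left]
  rintro (x | ⟨x, y, k⟩) hS hT
  · exact Set.disjoint_left.mp h hS hT
  · exact Set.disjoint_left.mp h hS.1 hT.1

lemma exists_subdivide_adj_of_adj (hx : x ∈ S) (hy : y ∈ T) (hadj : B.Adj x y) :
    ∃ u ∈ subdivisionSet B n S, ∃ v ∈ subdivisionSet B n T, (B.subdivide n).Adj u v := by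
  rcases hadj.ne.lt_or_gt with hxy | hxy
  · exact ⟨_, edgePoint_mem_subdivisionSet hx hxy hadj le_rfl, .inl y, hy,
      subdivide_adj_edgePoint_inl hadj⟩
  · exact ⟨.inl x, hx, _, edgePoint_mem_subdivisionSet hy hxy hadj.symm le_rfl,
      (subdivide_adj_edgePoint_inl hadj.symm).symm⟩

theorem _root_.HasCliqueMinor.subdivide {k : ℕ} (h : HasCliqueMinor B k) :
    HasCliqueMinor (B.subdivide n) k := by
  obtain ⟨S, hne, hconn, hdisj, hadj⟩ := h
  refine ⟨fun i => subdivisionSet B n (S i), fun i => ?_,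
    fun i => connected_induce_subdivisionSet (hconn i),
    fun i j hij => disjoint_subdivisionSet (hdisj i j hij), fun i j hij => ?_⟩
  · obtain ⟨x, hx⟩ := hne i
    exact ⟨.inl x, hx⟩
  · obtain ⟨x, hx, y, hy, hxy⟩ := hadj i j hij
    exact exists_subdivide_adj_of_adj hx hy hxy

/-- The lexicographic order on the vertices only serves to orient the edges for `subdivide`. -/
def transposeGrid (m : ℕ) : SimpleGraph (Fin m ×ₗ Fin m) :=
  fromRel fun a b => (ofLex a).1 = (ofLex b).1 ∧ (ofLex a).2.val + 1 = (ofLex b).2.val ∨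
    ofLex b = (ofLex a).swap

variable {m : ℕ}

lemma ncard_neighborSet_transposeGrid_le (a : Fin m ×ₗ Fin m) :
    ((transposeGrid m).neighborSet a).ncard ≤ 3 := by
  set p := ofLex a
  have row_le_one : ∀ d e : ℕ, {b : Fin m ×ₗ Fin m |
      (ofLex b).1 = p.1 ∧ (ofLex b).2.val + d = p.2.val + e}.ncard ≤ 1 :=
    fun d e => (Set.ncard_le_one).mpr fun b hb b' hb' => ofLex.injective <|
      Prod.ext (hb.1.trans hb'.1.symm) (Fin.ext (by have := hb.2; have := hb'.2; omega))
  have hsub : (transposeGrid m).neighborSet a ⊆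
      {b | (ofLex b).1 = p.1 ∧ (ofLex b).2.val + 1 = p.2.val + 0} ∪
      {b | (ofLex b).1 = p.1 ∧ (ofLex b).2.val + 0 = p.2.val + 1} ∪ {toLex p.swap} := by
    rintro b ⟨-, (⟨h1, h2⟩ | h) | (⟨h1, h2⟩ | h)⟩
    · exact .inl (.inr ⟨h1.symm, h2.symm⟩)
    · exact .inr (congrArg toLex h)
    · exact .inl (.inl ⟨h1, h2⟩)
    · exact .inr (show b = toLex p.swap by simp [p, h])
  refine (Set.ncard_le_ncard hsub).trans <| (Set.ncard_union_le _ _).trans ?_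
  grw [Set.ncard_union_le, row_le_one, row_le_one, Set.ncard_singleton]

lemma ncard_neighborSet_transposeGrid_eq_three (m : ℕ) :
    ((transposeGrid (m + 3)).neighborSet (toLex (0, 1))).ncard = 3 := by
  refine (ncard_neighborSet_transposeGrid_le _).antisymm ?_
  have h2 : 2 % (m + 3) = 2 := Nat.mod_eq_of_lt (by omega)
  have hsub : {toLex (0, 0), toLex (0, 2), toLex (1, 0)} ⊆
      (transposeGrid (m + 3)).neighborSet (toLex (0, 1)) := by
    rintro b (rfl | rfl | rfl) <;> simp [transposeGrid, Fin.ext_iff, h2]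
  refine le_trans (le_of_eq ?_) (Set.ncard_le_ncard hsub)
  rw [eq_comm, Set.ncard_eq_three]
  exact ⟨_, _, _, by simp [Fin.ext_iff, h2], by simp, by simp [Fin.ext_iff, h2], rfl⟩

lemma connected_induce_transposeGrid_row (i : Fin m) :
    ((transposeGrid m).induce {a | (ofLex a).1 = i}).Connected := by
  have hm : 0 < m := i.pos
  have reach : ∀ j (hj : j < m), ((transposeGrid m).induce {a | (ofLex a).1 = i}).Reachable
      ⟨toLex (i, ⟨0, hm⟩), rfl⟩ ⟨toLex (i, ⟨j, hj⟩), rfl⟩ := by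
    intro j
    induction j with
    | zero => exact fun _ => .rfl
    | succ j ih =>
      refine fun hj => (ih (by omega)).trans (Adj.reachable ?_)
      simp [transposeGrid, Fin.ext_iff]
  rw [connected_iff_exists_forall_reachable]
  refine ⟨⟨toLex (i, ⟨0, hm⟩), rfl⟩, ?_⟩
  rintro ⟨b, hb : (ofLex b).1 = i⟩
  subst hb
  convert reach (ofLex b).2 (ofLex b).2.isLt
  simp

lemma hasCliqueMinor_transposeGrid (m : ℕ) : HasCliqueMinor (transposeGrid m) m := by
  refine ⟨fun i => {a | (ofLex a).1 = i}, fun i => ⟨toLex (i, i), rfl⟩,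
    connected_induce_transposeGrid_row, fun i j hij => ?_, fun i j hij => ?_⟩
  · exact Set.disjoint_left.mpr fun a hi hj => hij (hi.symm.trans hj)
  · exact ⟨toLex (i, j), rfl, toLex (j, i), rfl, by simp [transposeGrid, hij]⟩

end SimpleGraph

theorem HasCliqueMinor.mono {V : Type*} {G : SimpleGraph V} {k l : ℕ} (h : HasCliqueMinor G l)
    (hkl : k ≤ l) : HasCliqueMinor G k := by
  obtain ⟨S, hne, hconn, hdisj, hadj⟩ := h
  have hinj := Fin.castLE_injective hkl
  exact ⟨S ∘ Fin.castLE hkl, fun i => hne _, fun i => hconn _,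
    fun i j hij => hdisj _ _ (hinj.ne hij), fun i j hij => hadj _ _ (hinj.ne hij)⟩

theorem HasSubdivision.exists_ncard_neighborSet_le {W V : Type*} [Finite V] {H : SimpleGraph W}
    {G : SimpleGraph V} (h : HasSubdivision H G) (x : W) :
    ∃ v, (H.neighborSet x).ncard ≤ (G.neighborSet v).ncard := by
  obtain ⟨b, hb, P, -, -, -, hdisj⟩ := h
  have hnil : ∀ {y} (hy : H.Adj x y), ¬(P hy).Nil := fun hy => Walk.not_nil_of_ne (hb.ne hy.ne)
  have snd_eq : ∀ {y y'} (hy : H.Adj x y) (hy' : H.Adj x y'), (P hy).snd = (P hy').snd →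
      y ≠ y' → (P hy).snd = b y := by
    intro y y' hy hy' heq hne
    have hmem : (P hy).snd ∈ (P hy').support := heq ▸ (P hy').getVert_mem_support 1
    refine (hdisj hy hy' (fun h => hne (Sym2.congr_right.mp h)) _ ((P hy).getVert_mem_support 1)
      hmem).resolve_left ?_
    exact ((P hy).adj_snd (hnil hy)).ne.symm
  refine ⟨b x, ?_⟩
  let f : H.neighborSet x → G.neighborSet (b x) :=
    fun y => ⟨(P y.2).snd, (P y.2).adj_snd (hnil y.2)⟩
  suffices f.Injective by simpa using Nat.card_le_card_of_injective f this
  rintro ⟨y, hy⟩ ⟨y', hy'⟩ heq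
  replace heq : (P hy).snd = (P hy').snd := congrArg Subtype.val heq
  refine Subtype.ext (by_contra fun hne => hne (hb ?_))
  exact (snd_eq hy hy' heq hne).symm.trans (heq.trans (snd_eq hy' hy heq.symm (Ne.symm hne)))

theorem exists_clique_minor_max_degree_three_general
    (f q : ℕ) (hq : 0 < q) :
    ∃ (V : Type) (_ : Fintype V) (G : SimpleGraph V),
      (∀ v : V, (G.neighborSet v).ncard ≤ 3) ∧
      (∃ v : V, (G.neighborSet v).ncard = 3) ∧
      HasCliqueMinor G f ∧
      (∀ u v : V, (G.neighborSet u).ncard = 3 → (G.neighborSet v).ncard = 3 →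
        ∀ p : G.Walk u v, p.IsPath → q ∣ p.length) ∧
      (∀ (W : Type) (H : SimpleGraph W),
        (∃ x : W, 4 ≤ (H.neighborSet x).ncard) → ¬ HasSubdivision H G) := by
  obtain ⟨n, rfl⟩ : ∃ n, q = n + 1 := ⟨q - 1, by omega⟩
  set G := (transposeGrid (f + 3)).subdivide n
  have hdeg : ∀ w, (G.neighborSet w).ncard ≤ 3 :=
    ncard_neighborSet_subdivide_le (Nat.le_succ 2) ncard_neighborSet_transposeGrid_le
  have branch : ∀ w, (G.neighborSet w).ncard = 3 → ∃ x, w = .inl x := fun w hw =>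
    exists_eq_inl_of_two_lt_ncard_neighborSet (show 2 < (G.neighborSet w).ncard by omega)
  refine ⟨_, inferInstance, G, hdeg, ⟨.inl _, ncard_neighborSet_subdivide_inl.trans
    (ncard_neighborSet_transposeGrid_eq_three f)⟩,
    (hasCliqueMinor_transposeGrid (f + 3)).subdivide.mono (Nat.le_add_right f 3), ?_, ?_⟩
  · intro u v hu hv p hp
    obtain ⟨a, rfl⟩ := branch u hu
    obtain ⟨b, rfl⟩ := branch v hv
    exact subdivide_dvd_length_of_isPath p hp
  · rintro W H ⟨x, hx⟩ hsub
    obtain ⟨v, hv⟩ := hsub.exists_ncard_neighborSet_le x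
    exact absurd (hx.trans hv) (hdeg v).not_gt

/-- For all positive integers `f` and `q` there is a graph `G` of maximum degree `3`
containing `K_f` as a minor in which every path between two vertices of degree `3` has
length divisible by `q`; consequently `G` contains no subdivision of any graph `H`
having a vertex of degree greater than `3`. -/
theorem exists_clique_minor_max_degree_three
    (f q : ℕ) (hf : 0 < f) (hq : 0 < q) :
    ∃ (V : Type) (_ : Fintype V) (G : SimpleGraph V),
      (∀ v : V, (G.neighborSet v).ncard ≤ 3) ∧
      (∃ v : V, (G.neighborSet v).ncard = 3) ∧
      HasCliqueMinor G f ∧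
      (∀ u v : V, (G.neighborSet u).ncard = 3 → (G.neighborSet v).ncard = 3 →
        ∀ p : G.Walk u v, p.IsPath → q ∣ p.length) ∧
      (∀ (W : Type) (H : SimpleGraph W),
        (∃ x : W, 4 ≤ (H.neighborSet x).ncard) → ¬ HasSubdivision H G) :=
  exists_clique_minor_max_degree_three_general f q hq
end
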